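/- arXiv:1109.5863 — 7 statements merged into one kernel-verified Lean document; each statement's English description precedes it below -/
import Mathlib

section
/- Let Γ be a countable group acting on a countable set X by permutations, and let w : X → ℝ be a positive function such that for each fixed g ∈ Γ the function x ↦ w(gx)/w(x) is bounded on X. If there exists a w-Følner sequence for the action, then there exists a w-invariant mean on X. -/
/-- A real-valued function on `X` is bounded. -/
def IsBdd {X : Type*} (f : X → ℝ) : Prop := ∃ M : ℝ, ∀ x, |f x| ≤ M

/-- A `w`-Følner sequence for the action of `Γ` on `X`: a sequence of (nonempty)
finite subsets `F n ⊆ X` such that for every `ε > 0` and every finite `L ⊆ Γ`,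
eventually `w(g F_n ∪ F_n) < (1+ε) · w(F_n)` for all `g ∈ L`. -/
def IsWFolner (Γ X : Type*) [Group Γ] [MulAction Γ X] [DecidableEq X]
    (w : X → ℝ) (F : ℕ → Finset X) : Prop :=
  (∀ n, (F n).Nonempty) ∧
  ∀ ε : ℝ, 0 < ε → ∀ L : Finset Γ, ∃ N : ℕ, ∀ n ≥ N, ∀ g ∈ L,
    ∑ x ∈ (F n).image (fun x => g • x) ∪ F n, w x < (1 + ε) * ∑ x ∈ F n, w x

/-- A `w`-invariant mean, viewed as a positive normalized linear functional on
bounded functions: `∫ F(gx) dμ(x) = ∫ F(x)·(w(g⁻¹x)/w(x)) dμ(x)`. -/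
structure IsWInvMean (Γ X : Type*) [Group Γ] [MulAction Γ X]
    (w : X → ℝ) (φ : (X → ℝ) → ℝ) : Prop where
  nonneg : ∀ f : X → ℝ, IsBdd f → (∀ x, 0 ≤ f x) → 0 ≤ φ f
  map_add : ∀ f g : X → ℝ, φ (f + g) = φ f + φ g
  map_smul : ∀ (c : ℝ) (f : X → ℝ), φ (c • f) = c * φ f
  norm_one : φ (fun _ => 1) = 1
  inv : ∀ (g : Γ) (f : X → ℝ), IsBdd f →
    φ (fun x => f (g • x)) = φ (fun x => f x * (w (g⁻¹ • x) / w x))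



open Filter Topology

lemma exists_ext_functional :
    ∃ ℓ : (ℕ → ℝ) →ₗ[ℝ] ℝ, ∀ u : ℕ → ℝ, (∃ M, ∀ n, |u n| ≤ M) →
      Filter.Tendsto u (↑(Ultrafilter.of (Filter.atTop : Filter ℕ)) : Filter ℕ) (𝓝 (ℓ u)) := by
  set U : Ultrafilter ℕ := Ultrafilter.of (Filter.atTop : Filter ℕ) with hU
  have hlim : ∀ u : ℕ → ℝ, (∃ M, ∀ n, |u n| ≤ M) →
      ∃ a, Tendsto u (U : Filter ℕ) (𝓝 a) := by
    rintro u ⟨M, hM⟩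
    obtain ⟨a, -, ha⟩ := (isCompact_Icc (a := -M) (b := M)).ultrafilter_le_nhds (U.map u)
      (by rw [Ultrafilter.coe_map, Filter.le_principal_iff, Filter.mem_map]
          exact Filter.univ_mem' (fun n => abs_le.mp (hM n)))
    exact ⟨a, by rwa [Ultrafilter.coe_map] at ha⟩
  let S : Submodule ℝ (ℕ → ℝ) :=
  { carrier := {u | ∃ M, ∀ n, |u n| ≤ M}
    add_mem' := by
      rintro u v ⟨M, hM⟩ ⟨K, hK⟩
      exact ⟨M + K, fun n => (abs_add_le _ _).trans (add_le_add (hM n) (hK n))⟩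
    zero_mem' := ⟨0, fun n => by simp⟩
    smul_mem' := by
      rintro c u ⟨M, hM⟩
      exact ⟨|c| * M, fun n => by
        rw [Pi.smul_apply, smul_eq_mul, abs_mul]
        exact mul_le_mul_of_nonneg_left (hM n) (abs_nonneg c)⟩ }
  have hS : ∀ u : S, Tendsto (u : ℕ → ℝ) (U : Filter ℕ)
      (𝓝 (limUnder (U : Filter ℕ) (u : ℕ → ℝ))) :=
    fun u => tendsto_nhds_limUnder (hlim u u.2)
  let ℓ₀ : S →ₗ[ℝ] ℝ :=
  { toFun := fun u => limUnder (U : Filter ℕ) (u : ℕ → ℝ)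
    map_add' := fun u v => by
      have h2 := (hS u).add (hS v)
      have h3 : ((u + v : S) : ℕ → ℝ) = fun n => (u : ℕ → ℝ) n + (v : ℕ → ℝ) n := by
        funext n; simp
      show limUnder (↑U) ((u + v : S) : ℕ → ℝ)
          = limUnder (↑U) (u : ℕ → ℝ) + limUnder (↑U) (v : ℕ → ℝ)
      rw [h3]
      exact tendsto_nhds_unique (tendsto_nhds_limUnder ⟨_, h2⟩) h2
    map_smul' := fun c u => by
      have h2 := (hS u).const_mul c
      have h3 : ((c • u : S) : ℕ → ℝ) = fun n => c * (u : ℕ → ℝ) n := by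
        funext n; simp [smul_eq_mul]
      show limUnder (↑U) ((c • u : S) : ℕ → ℝ) = c * limUnder (↑U) (u : ℕ → ℝ)
      rw [h3]
      exact tendsto_nhds_unique (tendsto_nhds_limUnder ⟨_, h2⟩) h2 }
  obtain ⟨q, hq⟩ := Submodule.exists_isCompl S
  refine ⟨ℓ₀.comp (S.linearProjOfIsCompl q hq), fun u hu => ?_⟩
  have h : (S.linearProjOfIsCompl q hq) u = ⟨u, hu⟩ :=
    Submodule.linearProjOfIsCompl_apply_left hq ⟨u, hu⟩
  rw [LinearMap.comp_apply, h]
  exact tendsto_nhds_limUnder (hlim u hu)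

/-- If there exists a `w`-Følner sequence, then there exists a `w`-invariant mean. -/
theorem exists_w_invariant_mean_of_wFolner
    {Γ X : Type*} [Group Γ] [Countable Γ] [Countable X] [MulAction Γ X]
    [DecidableEq X]
    (w : X → ℝ) (hw : ∀ x, 0 < w x)
    (hbdd : ∀ g : Γ, ∃ M : ℝ, ∀ x, w (g • x) / w x ≤ M)
    (F : ℕ → Finset X) (hF : IsWFolner Γ X w F) :
    ∃ φ : (X → ℝ) → ℝ, IsWInvMean Γ X w φ := by
  classical
  obtain ⟨ℓ, hℓ⟩ := exists_ext_functional
  set U : Filter ℕ := (↑(Ultrafilter.of (Filter.atTop : Filter ℕ)) : Filter ℕ) with hUdef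
  have hUle : U ≤ Filter.atTop := Ultrafilter.of_le _
  obtain ⟨x₀, -⟩ := hF.1 0
  have hWpos : ∀ n, 0 < ∑ x ∈ F n, w x :=
    fun n => Finset.sum_pos (fun x _ => hw x) (hF.1 n)
  set A : (X → ℝ) → ℕ → ℝ :=
    fun f n => (∑ x ∈ F n, f x * w x) / (∑ x ∈ F n, w x) with hA
  have hAbdd : ∀ (f : X → ℝ) (M : ℝ), (∀ x, |f x| ≤ M) → ∀ n, |A f n| ≤ M := by
    intro f M hM n
    have h1 : |∑ x ∈ F n, f x * w x| ≤ M * ∑ x ∈ F n, w x := by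
      calc |∑ x ∈ F n, f x * w x| ≤ ∑ x ∈ F n, |f x * w x| :=
            Finset.abs_sum_le_sum_abs _ _
        _ ≤ ∑ x ∈ F n, M * w x := Finset.sum_le_sum (fun x _ => by
              rw [abs_mul, abs_of_pos (hw x)]
              exact mul_le_mul_of_nonneg_right (hM x) (hw x).le)
        _ = M * ∑ x ∈ F n, w x := (Finset.mul_sum _ _ _).symm
    rw [hA]
    rw [abs_div, abs_of_pos (hWpos n), div_le_iff₀ (hWpos n)]
    exact h1
  refine ⟨fun f => ℓ (A f), ?_, ?_, ?_, ?_, ?_⟩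
  · -- nonneg
    rintro f ⟨M, hM⟩ hf
    have ht := hℓ (A f) ⟨M, hAbdd f M hM⟩
    refine ge_of_tendsto ht (Filter.Eventually.of_forall fun n => ?_)
    exact div_nonneg (Finset.sum_nonneg fun x _ => mul_nonneg (hf x) (hw x).le) (hWpos n).le
  · -- map_add
    intro f g
    have : A (f + g) = A f + A g := by
      funext n
      simp only [hA, Pi.add_apply, add_mul, Finset.sum_add_distrib, add_div]
    rw [this, map_add]
  · -- map_smul
    intro c f
    have : A (c • f) = c • A f := by
      funext n
      simp only [hA, Pi.smul_apply, smul_eq_mul, mul_assoc, ← Finset.mul_sum, mul_div_assoc]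
    rw [this, map_smul, smul_eq_mul]
  · -- norm_one
    have h1 : A (fun _ => 1) = fun _ => (1 : ℝ) := by
      funext n
      simp only [hA, one_mul]
      exact div_self (hWpos n).ne'
    have ht := hℓ (A fun _ => 1) ⟨1, hAbdd _ 1 (fun x => by simp)⟩
    have ht2 : Filter.Tendsto (A fun _ => 1) U (nhds 1) := by
      rw [h1]; exact tendsto_const_nhds
    exact tendsto_nhds_unique ht ht2
  · -- invariance
    rintro g f ⟨M₀, hM₀⟩
    have hM₀0 : 0 ≤ M₀ := (abs_nonneg _).trans (hM₀ x₀)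
    obtain ⟨M₁, hM₁⟩ := hbdd g⁻¹
    have hM₁0 : 0 < M₁ := lt_of_lt_of_le (div_pos (hw _) (hw _)) (hM₁ x₀)
    set u : ℕ → ℝ := A (fun x => f (g • x)) with hu
    set v : ℕ → ℝ := A (fun x => f x * (w (g⁻¹ • x) / w x)) with hv
    have hub : ∀ n, |u n| ≤ M₀ := hAbdd _ M₀ (fun x => hM₀ _)
    have hvb : ∀ n, |v n| ≤ M₀ * M₁ := by
      refine hAbdd _ _ (fun x => ?_)
      have hr : 0 ≤ w (g⁻¹ • x) / w x := (div_pos (hw _) (hw _)).le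
      rw [abs_mul, abs_of_nonneg hr]
      exact mul_le_mul (hM₀ x) (hM₁ x) hr hM₀0
    -- rewrite v as a sum over the translated set
    have hveq : ∀ n, v n =
        (∑ y ∈ (F n).image (fun x => g⁻¹ • x), f (g • y) * w y) / (∑ x ∈ F n, w x) := by
      intro n
      rw [hv, hA]
      beta_reduce
      congr 1
      rw [Finset.sum_image (by
        intro a _ b _ hab
        exact smul_left_cancel g⁻¹ hab)]
      refine Finset.sum_congr rfl (fun x _ => ?_)
      rw [smul_inv_smul, mul_assoc, div_mul_cancel₀ _ (hw x).ne']
    -- the difference tends to 0 along atTop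
    have hdiff : Filter.Tendsto (fun n => u n - v n) Filter.atTop (nhds 0) := by
      rw [Metric.tendsto_atTop]
      intro ε hε
      set ε' : ℝ := ε / (M₀ * (M₁ + 1) + 1) with hε'def
      have hε' : 0 < ε' := div_pos hε (by nlinarith)
      obtain ⟨N, hN⟩ := hF.2 ε' hε' {g, g⁻¹}
      refine ⟨N, fun n hn => ?_⟩
      set W : ℝ := ∑ x ∈ F n, w x with hWdef
      have hW : 0 < W := hWpos n
      set G : Finset X := (F n).image (fun x => g⁻¹ • x) with hG
      have hfol1 : ∑ x ∈ (F n).image (fun x => g • x) ∪ F n, w x < (1 + ε') * W :=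
        hN n hn g (by simp)
      have hfol2 : ∑ x ∈ G ∪ F n, w x < (1 + ε') * W :=
        hN n hn g⁻¹ (by simp)
      -- bound on w(G \ F n)
      have hsplit : ∀ T : Finset X, ∑ x ∈ T \ F n, w x + ∑ x ∈ F n, w x
          = ∑ x ∈ T ∪ F n, w x := by
        intro T
        rw [← Finset.sum_union Finset.sdiff_disjoint, Finset.sdiff_union_self_eq_union]
      have b1 : ∑ x ∈ G \ F n, w x < ε' * W := by
        have := hsplit G
        have h2 : (1 + ε') * W = W + ε' * W := by ring
        rw [← this, h2] at hfol2
        linarith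
      have b1' : ∑ x ∈ (F n).image (fun x => g • x) \ F n, w x < ε' * W := by
        have := hsplit ((F n).image (fun x => g • x))
        have h2 : (1 + ε') * W = W + ε' * W := by ring
        rw [← this, h2] at hfol1
        linarith
      -- bound on w(F n \ G)
      have b2 : ∑ x ∈ F n \ G, w x ≤ M₁ * (ε' * W) := by
        have step1 : ∀ x, w x ≤ M₁ * w (g • x) := by
          intro x
          have := hM₁ (g • x)
          rw [inv_smul_smul] at this
          rw [div_le_iff₀ (hw _)] at this
          linarith [this]
        calc ∑ x ∈ F n \ G, w x ≤ ∑ x ∈ F n \ G, M₁ * w (g • x) :=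
              Finset.sum_le_sum (fun x _ => step1 x)
          _ = M₁ * ∑ x ∈ F n \ G, w (g • x) := (Finset.mul_sum _ _ _).symm
          _ = M₁ * ∑ y ∈ (F n \ G).image (fun x => g • x), w y := by
              rw [Finset.sum_image (by
                intro a _ b _ hab
                exact smul_left_cancel g hab)]
          _ ≤ M₁ * ∑ y ∈ (F n).image (fun x => g • x) \ F n, w y := by
              refine mul_le_mul_of_nonneg_left ?_ hM₁0.le
              refine Finset.sum_le_sum_of_subset_of_nonneg ?_ (fun y _ _ => (hw y).le)
              intro y hy
              simp only [Finset.mem_image, Finset.mem_sdiff, hG] at hy ⊢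
              obtain ⟨x, ⟨hxF, hxG⟩, rfl⟩ := hy
              refine ⟨⟨x, hxF, rfl⟩, fun hgx => hxG ?_⟩
              exact ⟨g • x, hgx, by rw [inv_smul_smul]⟩
          _ ≤ M₁ * (ε' * W) := mul_le_mul_of_nonneg_left b1'.le hM₁0.le
      -- pointwise bound on the summand
      set h : X → ℝ := fun x => f (g • x) * w x with hh
      have hhb : ∀ x, |h x| ≤ M₀ * w x := by
        intro x
        rw [hh]
        rw [abs_mul, abs_of_pos (hw x)]
        exact mul_le_mul_of_nonneg_right (hM₀ _) (hw x).le
      -- numerator estimate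
      have hnum : |∑ x ∈ F n, h x - ∑ x ∈ G, h x| ≤ M₀ * (M₁ + 1) * (ε' * W) := by
        have hsp : ∑ x ∈ F n, h x - ∑ x ∈ G, h x
            = ∑ x ∈ F n \ G, h x - ∑ x ∈ G \ F n, h x := by
          rw [← Finset.sum_inter_add_sum_sdiff (F n) G h,
            ← Finset.sum_inter_add_sum_sdiff G (F n) h, Finset.inter_comm]
          ring
        rw [hsp]
        have e1 : |∑ x ∈ F n \ G, h x| ≤ M₀ * (M₁ * (ε' * W)) := by
          refine (Finset.abs_sum_le_sum_abs _ _).trans ?_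
          calc ∑ x ∈ F n \ G, |h x| ≤ ∑ x ∈ F n \ G, M₀ * w x :=
                Finset.sum_le_sum (fun x _ => hhb x)
            _ = M₀ * ∑ x ∈ F n \ G, w x := (Finset.mul_sum _ _ _).symm
            _ ≤ M₀ * (M₁ * (ε' * W)) := mul_le_mul_of_nonneg_left b2 hM₀0
        have e2 : |∑ x ∈ G \ F n, h x| ≤ M₀ * (ε' * W) := by
          refine (Finset.abs_sum_le_sum_abs _ _).trans ?_
          calc ∑ x ∈ G \ F n, |h x| ≤ ∑ x ∈ G \ F n, M₀ * w x :=
                Finset.sum_le_sum (fun x _ => hhb x)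
            _ = M₀ * ∑ x ∈ G \ F n, w x := (Finset.mul_sum _ _ _).symm
            _ ≤ M₀ * (ε' * W) := mul_le_mul_of_nonneg_left b1.le hM₀0
        calc |∑ x ∈ F n \ G, h x - ∑ x ∈ G \ F n, h x|
            ≤ |∑ x ∈ F n \ G, h x| + |∑ x ∈ G \ F n, h x| := abs_sub _ _
          _ ≤ M₀ * (M₁ * (ε' * W)) + M₀ * (ε' * W) := add_le_add e1 e2
          _ = M₀ * (M₁ + 1) * (ε' * W) := by ring
      have hud : u n - v n = (∑ x ∈ F n, h x - ∑ x ∈ G, h x) / W := by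
        rw [hveq n, hu, hA, sub_div]
      rw [Real.dist_eq, sub_zero, hud, abs_div, abs_of_pos hW, div_lt_iff₀ hW]
      calc |∑ x ∈ F n, h x - ∑ x ∈ G, h x| ≤ M₀ * (M₁ + 1) * (ε' * W) := hnum
        _ = (M₀ * (M₁ + 1) * ε') * W := by ring
        _ < ε * W := by
            have hc : 0 ≤ M₀ * (M₁ + 1) := by positivity
            have hd : 0 < M₀ * (M₁ + 1) + 1 := by linarith
            have hkey : M₀ * (M₁ + 1) * ε' < ε := by
              have he : M₀ * (M₁ + 1) * ε' = M₀ * (M₁ + 1) * ε / (M₀ * (M₁ + 1) + 1) := by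
                rw [hε'def]; ring
              rw [he, div_lt_iff₀ hd]
              nlinarith
            exact mul_lt_mul_of_pos_right hkey hW
    have htu := hℓ u ⟨M₀, hub⟩
    have htv := hℓ v ⟨M₀ * M₁, hvb⟩
    have h0 : Filter.Tendsto (fun n => u n - v n) U (nhds 0) := hdiff.mono_left hUle
    have := tendsto_nhds_unique (htu.sub htv) h0
    have : ℓ u = ℓ v := by linarith [this]
    exact this
end

section
/- Let Γ act on a countable set X and let w : X → ℝ be positive with each x ↦ w(gx)/w(x) bounded. If there exists a w-compression system, then there exists no w-invariant mean on X. -/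
/-!
Transporting each `Ψ_g` by `g` with the Radon–Nikodym weight `w(g⁻¹x)/w(x)` does not change
its mean, so the compressed function `H x = ∑_{g∈T} Ψ_g(g⁻¹x)·w(g⁻¹x)/w(x)` has the same mean
as `∑_{g∈T} Ψ_g = 1`. But `0 ≤ H < 1/2` pointwise, so positivity forces its mean to be at
most `1/2`.
-/

namespace IsBdd

variable {X Y : Type*}

theorem comp {f : X → ℝ} (hf : IsBdd f) (h : Y → X) : IsBdd (f ∘ h) :=
  let ⟨M, hM⟩ := hf; ⟨M, fun y => hM (h y)⟩

theorem const (c : ℝ) : IsBdd (fun _ : X => c) := ⟨|c|, fun _ => le_rfl⟩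

theorem sub {f g : X → ℝ} (hf : IsBdd f) (hg : IsBdd g) : IsBdd (f - g) := by
  obtain ⟨M, hM⟩ := hf
  obtain ⟨N, hN⟩ := hg
  exact ⟨M + N, fun x => (abs_sub (f x) (g x)).trans (add_le_add (hM x) (hN x))⟩

theorem of_mem_Icc {f : X → ℝ} {a b : ℝ} (h : ∀ x, f x ∈ Set.Icc a b) : IsBdd f :=
  ⟨max |a| |b|, fun x => abs_le_max_abs_abs (h x).1 (h x).2⟩

end IsBdd

namespace IsWInvMean

variable {Γ X : Type*} [Group Γ] [MulAction Γ X] {w : X → ℝ} {φ : (X → ℝ) → ℝ}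

def toLinearMap (hφ : IsWInvMean Γ X w φ) : (X → ℝ) →ₗ[ℝ] ℝ where
  toFun := φ
  map_add' := hφ.map_add
  map_smul' := hφ.map_smul

theorem map_sum (hφ : IsWInvMean Γ X w φ) {ι : Type*} (S : Finset ι) (F : ι → X → ℝ) :
    φ (fun x => ∑ i ∈ S, F i x) = ∑ i ∈ S, φ (F i) := by
  rw [← Finset.sum_fn]
  exact _root_.map_sum hφ.toLinearMap F S

theorem map_const (hφ : IsWInvMean Γ X w φ) (c : ℝ) : φ (fun _ => c) = c := by
  have h := hφ.map_smul c fun _ => 1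
  simp only [hφ.norm_one, mul_one] at h
  simpa only [Pi.smul_def, smul_eq_mul, mul_one] using h

theorem mono (hφ : IsWInvMean Γ X w φ) {f g : X → ℝ} (hf : IsBdd f) (hg : IsBdd g)
    (hfg : ∀ x, f x ≤ g x) : φ f ≤ φ g := by
  have hsplit : φ g = φ (g - f) + φ f := by rw [← hφ.map_add, sub_add_cancel]
  have := hφ.nonneg (g - f) (hg.sub hf) fun x => sub_nonneg.2 (hfg x)
  linarith

theorem map_eq_map_transport (hφ : IsWInvMean Γ X w φ) (g : Γ) {f : X → ℝ} (hf : IsBdd f) :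
    φ f = φ (fun x => f (g⁻¹ • x) * (w (g⁻¹ • x) / w x)) := by
  simpa using hφ.inv g (fun x => f (g⁻¹ • x)) (hf.comp _)

end IsWInvMean

theorem no_w_invariant_mean_of_compression_general
    {Γ X : Type*} [Group Γ] [MulAction Γ X]
    (w : X → ℝ) (hw : ∀ x, 0 < w x)
    (T : Finset Γ) (Ψ : Γ → X → ℝ)
    (hnonneg : ∀ g x, 0 ≤ Ψ g x)
    (hΨbdd : ∀ g ∈ T, IsBdd (Ψ g))
    (hsum : ∀ x, ∑ g ∈ T, Ψ g x = 1)
    (hcomp : ∀ x, ∑ g ∈ T, Ψ g (g⁻¹ • x) * (w (g⁻¹ • x) / w x) < 1 / 2) :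
    ¬ ∃ φ : (X → ℝ) → ℝ, IsWInvMean Γ X w φ := by
  rintro ⟨φ, hφ⟩
  set H : X → ℝ := fun x => ∑ g ∈ T, Ψ g (g⁻¹ • x) * (w (g⁻¹ • x) / w x)
  have hH_mem : ∀ x, H x ∈ Set.Icc 0 (1 / 2) := fun x =>
    ⟨Finset.sum_nonneg fun g _ => mul_nonneg (hnonneg _ _) (div_nonneg (hw _).le (hw _).le),
      (hcomp x).le⟩
  have hH_mean : φ H = 1 := by
    calc φ H = ∑ g ∈ T, φ (Ψ g) := by
          rw [hφ.map_sum]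
          exact Finset.sum_congr rfl fun g hg => (hφ.map_eq_map_transport g (hΨbdd g hg)).symm
      _ = φ (fun x => ∑ g ∈ T, Ψ g x) := (hφ.map_sum T Ψ).symm
      _ = 1 := by simp only [hsum, hφ.map_const]
  have hH_le : φ H ≤ 1 / 2 := by
    simpa only [hφ.map_const] using
      hφ.mono (IsBdd.of_mem_Icc hH_mem) (IsBdd.const _) fun x => (hH_mem x).2
  linarith

/-- If there exists a `w`-compression system (a finite `T ⊆ Γ` and bounded
nonnegative functions `Ψ_g` with `∑_{g∈T} Ψ_g(x) = 1` and
`∑_{g∈T} Ψ_g(g⁻¹x)·w(g⁻¹x)/w(x) < 1/2` for all `x`), then there is no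
`w`-invariant mean. -/
theorem no_w_invariant_mean_of_compression
    {Γ X : Type*} [Group Γ] [Countable Γ] [Countable X] [MulAction Γ X]
    (w : X → ℝ) (hw : ∀ x, 0 < w x)
    (hbdd : ∀ g : Γ, ∃ M : ℝ, ∀ x, w (g • x) / w x ≤ M)
    (T : Finset Γ) (Ψ : Γ → X → ℝ)
    (hnonneg : ∀ g x, 0 ≤ Ψ g x)
    (hΨbdd : ∀ g ∈ T, IsBdd (Ψ g))
    (hsum : ∀ x, ∑ g ∈ T, Ψ g x = 1)
    (hcomp : ∀ x, ∑ g ∈ T, Ψ g (g⁻¹ • x) * (w (g⁻¹ • x) / w x) < 1 / 2) :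
    ¬ ∃ φ : (X → ℝ) → ℝ, IsWInvMean Γ X w φ :=
  no_w_invariant_mean_of_compression_general w hw T Ψ hnonneg hΨbdd hsum hcomp
end

section
/- Let G be a graph of finite asymptotic dimension d, H a finite induced subgraph, w a nonnegative weight function on V(H), and ε > 0. Set r = 2(1 + ⌊1/ε⌋) and let 𝒰₁,…,𝒰_d be the cover from the definition of asymptotic dimension with parameter r and diameter bound R. Then for each i there exists t(i) ∈ {1,…,1+⌊1/ε⌋} such that the set S_i(t(i)) of vertices of H at distance exactly t(i) from 𝒰_i satisfies w(S_i(t(i))) ≤ ε·w(V(H)), and the set S = ∪_{i=1}^d S_i(t(i)) satisfies w(S) ≤ dε·w(V(H)) and every component of H ∖ S has diameter at most d(R+1). -/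
/-!
The level `t(i)` is chosen by pigeonhole among the disjoint level sets `S_i(1), …, S_i(1 + ⌊1/ε⌋)`.
For the diameter bound, the distance to `⋃ 𝒰_i` changes by at most one along an edge, so on a
component of `H ∖ S` meeting `⋃ 𝒰_i` it stays below `t(i)`. The nearest member of `𝒰_i` then
cannot change along an edge, since distinct members are `2t(i)` apart; hence the component meets
at most one member of each `𝒰_i`. A walk inside the component is thus covered by `d` pieces of
diameter at most `R`, and jumping across each piece costs at most `R + 1`.
-/

open scoped Classical

/-- Distance (in `G`) from a vertex to a set of vertices. -/
noncomputable def graphSetDist {V : Type*} (G : SimpleGraph V) (x : V) (A : Set V) : ℕ :=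
  sInf {n : ℕ | ∃ a ∈ A, G.dist x a = n}

open SimpleGraph

section graphSetDist

variable {V : Type*} {G : SimpleGraph V} {x u v a : V} {A : Set V}

lemma graphSetDist_le_dist (ha : a ∈ A) : graphSetDist G x A ≤ G.dist x a :=
  Nat.sInf_le ⟨a, ha, rfl⟩

lemma graphSetDist_eq_zero_of_mem (hx : x ∈ A) : graphSetDist G x A = 0 :=
  Nat.le_zero.mp <| (graphSetDist_le_dist hx).trans_eq G.dist_self

lemma exists_dist_eq_graphSetDist (hA : A.Nonempty) :
    ∃ a ∈ A, G.dist x a = graphSetDist G x A :=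
  Nat.sInf_mem (hA.image (G.dist x))

lemma graphSetDist_le_add_one_of_adj (h : G.Adj u v) :
    graphSetDist G v A ≤ graphSetDist G u A + 1 := by
  rcases A.eq_empty_or_nonempty with rfl | hA
  · simp [graphSetDist]
  obtain ⟨a, ha, hua⟩ := exists_dist_eq_graphSetDist (G := G) (x := u) hA
  calc graphSetDist G v A ≤ G.dist v a := graphSetDist_le_dist ha
    _ ≤ G.dist v u + G.dist u a := h.symm.reachable.dist_triangle_left a
    _ = graphSetDist G u A + 1 := by rw [dist_eq_one_iff_adj.mpr h.symm, hua, add_comm]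

end graphSetDist

lemma SimpleGraph.Reachable.induction_on_adj {V : Type*} {G : SimpleGraph V} {P : V → Prop}
    {x y : V} (hxy : G.Reachable x y) (hx : P x)
    (step : ∀ u v, G.Reachable x u → G.Adj u v → P u → P v) : P y := by
  rw [reachable_iff_reflTransGen] at hxy
  induction hxy with
  | refl => exact hx
  | tail hxu huv ih => exact step _ _ ((reachable_iff_reflTransGen _ _).mpr hxu) huv ih

section levels

variable {V : Type*} {G : SimpleGraph V} {𝒰 : Set (Set V)} {t : ℕ} {S : Set V}

lemma graphSetDist_lt_of_induce_reachable (hS : ∀ v ∈ S, graphSetDist G v (⋃₀ 𝒰) ≠ t)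
    {p v : S} (hpv : (G.induce S).Reachable p v) (hp : graphSetDist G p (⋃₀ 𝒰) < t) :
    graphSetDist G v (⋃₀ 𝒰) < t := by
  refine hpv.induction_on_adj (P := fun v : S => graphSetDist G v (⋃₀ 𝒰) < t) hp
    fun u v _ huv hu => ?_
  have := graphSetDist_le_add_one_of_adj (A := ⋃₀ 𝒰) (G := G) (u := u) (v := v) huv
  have := hS v v.2
  omega

lemma eq_of_mem_of_induce_reachable (ht : 1 ≤ t)
    (hsep : ∀ A ∈ 𝒰, ∀ B ∈ 𝒰, A ≠ B → ∀ x ∈ A, ∀ y ∈ B, 2 * t ≤ G.dist x y)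
    (hS : ∀ v ∈ S, graphSetDist G v (⋃₀ 𝒰) ≠ t) {p q : S} (hpq : (G.induce S).Reachable p q)
    {A B : Set V} (hA : A ∈ 𝒰) (hB : B ∈ 𝒰) (hpA : p.1 ∈ A) (hqB : q.1 ∈ B) : A = B := by
  by_contra hAB
  have hreach : ∀ v : S, (G.induce S).Reachable p v → ∀ c ∈ ⋃₀ 𝒰, G.Reachable v c := by
    rintro v hpv c ⟨C, hC, hcC⟩
    have hqv := (hpq.symm.trans hpv).map (Embedding.induce S).toHom
    replace hpv := hpv.map (Embedding.induce S).toHom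
    by_cases hCA : C = A
    · subst hCA
      have := hsep C hC B hB hAB c hcC q hqB
      exact hqv.symm.trans (Reachable.of_dist_ne_zero (u := c) (v := q) (by omega)).symm
    · have := hsep C hC A hA hCA c hcC p hpA
      exact hpv.symm.trans (Reachable.of_dist_ne_zero (u := c) (v := p) (by omega)).symm
  have hU : (⋃₀ 𝒰).Nonempty := ⟨p, A, hA, hpA⟩
  -- Along the component, some point of `A` stays within distance `< t`: a nearest point of
  -- another member `C` would put `A` and `C` at distance `< 2t`.
  have hq : ∃ a ∈ A, G.dist q a < t := by
    refine hpq.induction_on_adj (P := fun v : S => ∃ a ∈ A, G.dist v a < t)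
      ⟨p, hpA, by rw [dist_self]; omega⟩ ?_
    rintro u v hpu huv ⟨a, ha, hua⟩
    have hpv := hpu.trans huv.reachable
    have hv := graphSetDist_lt_of_induce_reachable hS hpv
      (by rw [graphSetDist_eq_zero_of_mem (Set.mem_sUnion_of_mem hpA hA)]; omega)
    obtain ⟨c, ⟨C, hC, hcC⟩, hvc⟩ := exists_dist_eq_graphSetDist (G := G) (x := v) hU
    by_cases hCA : C = A
    · exact ⟨c, hCA ▸ hcC, by omega⟩
    have hsepac := hsep A hA C hC (Ne.symm hCA) a ha c hcC
    have hau : G.Reachable a u := (hreach u hpu a ⟨A, hA, ha⟩).symm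
    have huvG : G.Adj u v := huv
    have huv' : G.dist u v = 1 := dist_eq_one_iff_adj.mpr huvG
    have := hau.dist_triangle_left c
    have := huvG.reachable.dist_triangle_left c
    rw [SimpleGraph.dist_comm] at hua
    omega
  obtain ⟨a, ha, hqa⟩ := hq
  have := hsep A hA B hB hAB a ha q hqB
  rw [SimpleGraph.dist_comm] at hqa
  omega

end levels

namespace SimpleGraph.Walk

variable {V ι : Type*} {G : SimpleGraph V} {x y : V}

lemma dist_le_card_mul_of_cover [Fintype ι] (W : G.Walk x y) (C : ι → Set V) (R : ℕ)
    (hcover : ∀ v ∈ W.support, ∃ j, v ∈ C j)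
    (hdiam : ∀ j, ∀ u ∈ W.support, ∀ v ∈ W.support, u ∈ C j → v ∈ C j → G.dist u v ≤ R) :
    G.dist x y ≤ Fintype.card ι * (R + 1) := by
  let met (k : ℕ) : Finset ι := {j | ∃ l ≤ k, W.getVert l ∈ C j}
  suffices key : ∀ k ≤ W.length, G.dist x (W.getVert k) ≤ (met k).card * (R + 1) by
    calc G.dist x y = G.dist x (W.getVert W.length) := by rw [getVert_length]
      _ ≤ (met W.length).card * (R + 1) := key _ le_rfl
      _ ≤ Fintype.card ι * (R + 1) := Nat.mul_le_mul_right _ (Finset.card_le_univ _)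
  -- If `W.getVert k ∈ C j`, jump back to the first visit of `C j`: the vertex just before it has
  -- met strictly fewer pieces.
  intro k
  induction k using Nat.strong_induction_on with
  | _ k ih =>
  intro hk
  obtain ⟨j, hj⟩ := hcover _ (W.getVert_mem_support k)
  have hex : ∃ l, W.getVert l ∈ C j := ⟨k, hj⟩
  have hfirst_le : Nat.find hex ≤ k := Nat.find_min' hex hj
  have hj_met : j ∈ met k := by simp only [met, Finset.mem_filter]; exact ⟨by simp, k, le_rfl, hj⟩
  have hjump : G.dist (W.getVert (Nat.find hex)) (W.getVert k) ≤ R :=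
    hdiam j _ (W.getVert_mem_support _) _ (W.getVert_mem_support _) (Nat.find_spec hex) hj
  rcases hfirst : Nat.find hex with _ | l
  · rw [hfirst, getVert_zero] at hjump
    have := Finset.card_pos.mpr ⟨j, hj_met⟩
    nlinarith
  have hj_not_met : j ∉ met l := by
    simp only [met, Finset.mem_filter, not_exists, not_and]
    exact fun _ l' hl' hl'j => Nat.find_min hex (by omega) hl'j
  have hmet_lt : (met l).card < (met k).card := by
    refine Finset.card_lt_card ⟨?_, fun h => hj_not_met (h hj_met)⟩
    intro i hi
    simp only [met, Finset.mem_filter] at hi ⊢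
    obtain ⟨_, l', hl', hl'i⟩ := hi
    exact ⟨by simp, l', by omega, hl'i⟩
  have hadj : G.Adj (W.getVert l) (W.getVert (l + 1)) := W.adj_getVert_succ (by omega)
  rw [hfirst] at hjump
  calc G.dist x (W.getVert k)
      ≤ G.dist x (W.getVert l) + G.dist (W.getVert l) (W.getVert k) :=
        (W.take l).reachable.dist_triangle_left _
    _ ≤ G.dist x (W.getVert l) + (1 + R) := by
        grw [hadj.reachable.dist_triangle_left, dist_eq_one_iff_adj.mpr hadj, hjump]
    _ ≤ (met l).card * (R + 1) + (R + 1) := by grw [ih l (by omega) (by omega)]; omega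
    _ ≤ (met k).card * (R + 1) := by nlinarith

end SimpleGraph.Walk

lemma dist_le_of_induce_reachable {V ι : Type*} [Fintype ι] {G : SimpleGraph V}
    {U : ι → Set (Set V)} {t : ι → ℕ} {R : ℕ} {S : Set V} (ht : ∀ i, 1 ≤ t i)
    (hcover : ∀ v : V, ∃ i, ∃ A ∈ U i, v ∈ A)
    (hdiam : ∀ i, ∀ A ∈ U i, ∀ x ∈ A, ∀ y ∈ A, G.dist x y ≤ R)
    (hsep : ∀ i, ∀ A ∈ U i, ∀ B ∈ U i, A ≠ B → ∀ x ∈ A, ∀ y ∈ B, 2 * t i ≤ G.dist x y)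
    (hS : ∀ i, ∀ v ∈ S, graphSetDist G v (⋃₀ U i) ≠ t i) {x y : S}
    (hxy : (G.induce S).Reachable x y) :
    G.dist x y ≤ Fintype.card ι * (R + 1) := by
  obtain ⟨W⟩ := hxy
  have hreach : ∀ u ∈ (W.map (Embedding.induce S).toHom).support,
      ∃ u' : S, (G.induce S).Reachable x u' ∧ u'.1 = u := by
    intro u hu
    obtain ⟨u', hu', rfl⟩ := List.mem_map.mp ((Walk.support_map _ _) ▸ hu)
    exact ⟨u', (W.takeUntil u' hu').reachable, rfl⟩
  refine (W.map (Embedding.induce S).toHom).dist_le_card_mul_of_cover (fun i => ⋃₀ U i) R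
    (fun v _ => by simpa using hcover v) fun i u hu v hv ⟨A, hA, huA⟩ ⟨B, hB, hvB⟩ => ?_
  obtain ⟨u', hxu, rfl⟩ := hreach u hu
  obtain ⟨v', hxv, rfl⟩ := hreach v hv
  have hAB :=
    eq_of_mem_of_induce_reachable (ht i) (hsep i) (hS i) (hxu.symm.trans hxv) hA hB huA hvB
  exact hdiam i A hA _ huA _ (hAB ▸ hvB)

lemma exists_mem_Icc_sum_filter_eq_le {α : Type*} (s : Finset α) (w : α → ℝ)
    (hw : ∀ x ∈ s, 0 ≤ w x) (f : α → ℕ) {ε : ℝ} {m : ℕ} (hm : 1 ≤ ε * m) :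
    ∃ j ∈ Finset.Icc 1 m, ∑ x ∈ s with f x = j, w x ≤ ε * ∑ x ∈ s, w x := by
  have hm0 : m ≠ 0 := by rintro rfl; norm_num at hm
  have hsum := Finset.sum_nonneg hw
  refine Finset.exists_sum_fiber_le_of_sum_fiber_nonneg_of_sum_le_nsmul
    (fun _ _ => Finset.sum_nonneg fun x hx => hw x (Finset.mem_filter.mp hx).1)
    ⟨1, Finset.mem_Icc.mpr ⟨le_rfl, Nat.one_le_iff_ne_zero.mpr hm0⟩⟩ ?_
  rw [Nat.card_Icc, add_tsub_cancel_right, nsmul_eq_mul]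
  nlinarith

lemma Finset.sum_filter_exists_le {α ι : Type*} [Fintype ι] (s : Finset α) (P : ι → α → Prop)
    [∀ i, DecidablePred (P i)] [DecidablePred fun x => ∃ i, P i x] (w : α → ℝ)
    (hw : ∀ x ∈ s, 0 ≤ w x) :
    ∑ x ∈ s with ∃ i, P i x, w x ≤ ∑ i, ∑ x ∈ s with P i x, w x := by
  simp only [Finset.sum_filter]
  rw [Finset.sum_comm]
  refine Finset.sum_le_sum fun x hx => ?_
  split_ifs with h
  · obtain ⟨i, hi⟩ := h
    exact (if_pos hi).symm.le.trans <| Finset.single_le_sum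
      (f := fun i => if P i x then w x else 0)
      (fun j _ => by split_ifs <;> simp [hw x hx]) (Finset.mem_univ i)
  · exact Finset.sum_nonneg fun j _ => by split_ifs <;> simp [hw x hx]

lemma one_le_mul_one_add_floor_one_div {ε : ℝ} (hε : 0 < ε) :
    1 ≤ ε * ((1 + ⌊1 / ε⌋₊ : ℕ) : ℝ) := by
  have := Nat.lt_floor_add_one (1 / ε)
  rw [div_lt_iff₀ hε] at this
  push_cast
  linarith

theorem asdim_separating_set_general
    {V : Type*} (G : SimpleGraph V)
    (d : ℕ) (ε : ℝ) (hε : 0 < ε)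
    (R : ℕ) (U : Fin d → Set (Set V))
    (hcover : ∀ v : V, ∃ i, ∃ A ∈ U i, v ∈ A)
    (hdiam : ∀ i, ∀ A ∈ U i, ∀ x ∈ A, ∀ y ∈ A, G.dist x y ≤ R)
    (hsep : ∀ i, ∀ A ∈ U i, ∀ B ∈ U i, A ≠ B → ∀ x ∈ A, ∀ y ∈ B,
      2 * (1 + Nat.floor (1 / ε)) ≤ G.dist x y)
    (H : Finset V) (w : V → ℝ) (hw : ∀ x, 0 ≤ w x) :
    ∃ t : Fin d → ℕ,
      (∀ i, 1 ≤ t i ∧ t i ≤ 1 + Nat.floor (1 / ε)) ∧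
      (∀ i, ∑ x ∈ H.filter (fun x => graphSetDist G x (⋃₀ U i) = t i), w x
        ≤ ε * ∑ x ∈ H, w x) ∧
      (∑ x ∈ H.filter (fun x => ∃ i, graphSetDist G x (⋃₀ U i) = t i), w x
        ≤ d * ε * ∑ x ∈ H, w x) ∧
      (∀ x y : ((H.filter
            (fun x => ¬ ∃ i, graphSetDist G x (⋃₀ U i) = t i) : Finset V) : Set V),
        (G.induce _).Reachable x y → G.dist x.1 y.1 ≤ d * (R + 1)) := by
  choose t ht hwt using fun i => exists_mem_Icc_sum_filter_eq_le H w (fun x _ => hw x)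
    (graphSetDist G · (⋃₀ U i)) (one_le_mul_one_add_floor_one_div hε)
  refine ⟨t, fun i => Finset.mem_Icc.mp (ht i), hwt, ?_, ?_⟩
  · calc _ ≤ ∑ i, ∑ x ∈ H with graphSetDist G x (⋃₀ U i) = t i, w x :=
          Finset.sum_filter_exists_le H _ w fun x _ => hw x
      _ ≤ ∑ _i : Fin d, ε * ∑ x ∈ H, w x := Finset.sum_le_sum fun i _ => hwt i
      _ = d * ε * ∑ x ∈ H, w x := by simp [mul_assoc]
  intro x y hxy
  simpa using dist_le_of_induce_reachable (fun i => (Finset.mem_Icc.mp (ht i)).1) hcover hdiam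
    (fun i A hA B hB hAB a ha b hb => (Nat.mul_le_mul_left 2 (Finset.mem_Icc.mp (ht i)).2).trans
      (hsep i A hA B hB hAB a ha b hb))
    (fun i v hv h => by
      simp only [Finset.coe_filter, Set.mem_ofPred_eq] at hv
      exact hv.2 ⟨i, h⟩) hxy

/-- The key step in proving weighted hyperfiniteness from finite asymptotic
dimension: given the cover `𝒰₁,…,𝒰_d` with parameter `r = 2(1+⌊1/ε⌋)` and
diameter bound `R`, for each `i` some level set `S_i(t(i))` (vertices of `H` at
distance exactly `t(i)` from `𝒰_i`, with `1 ≤ t(i) ≤ 1+⌊1/ε⌋`) has weight at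
most `ε·w(H)`; their union `S` has weight at most `d·ε·w(H)`, and every
component of `H ∖ S` has diameter at most `d(R+1)`. -/
theorem asdim_separating_set
    {V : Type*} [DecidableEq V] (G : SimpleGraph V)
    (d : ℕ) (ε : ℝ) (hε : 0 < ε)
    (R : ℕ) (U : Fin d → Set (Set V))
    (hcover : ∀ v : V, ∃ i, ∃ A ∈ U i, v ∈ A)
    (hdiam : ∀ i, ∀ A ∈ U i, ∀ x ∈ A, ∀ y ∈ A, G.dist x y ≤ R)
    (hsep : ∀ i, ∀ A ∈ U i, ∀ B ∈ U i, A ≠ B → ∀ x ∈ A, ∀ y ∈ B,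
      2 * (1 + Nat.floor (1 / ε)) ≤ G.dist x y)
    (H : Finset V) (w : V → ℝ) (hw : ∀ x, 0 ≤ w x) :
    ∃ t : Fin d → ℕ,
      (∀ i, 1 ≤ t i ∧ t i ≤ 1 + Nat.floor (1 / ε)) ∧
      (∀ i, ∑ x ∈ H.filter (fun x => graphSetDist G x (⋃₀ U i) = t i), w x
        ≤ ε * ∑ x ∈ H, w x) ∧
      (∑ x ∈ H.filter (fun x => ∃ i, graphSetDist G x (⋃₀ U i) = t i), w x
        ≤ d * ε * ∑ x ∈ H, w x) ∧
      (∀ x y : ((H.filter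
            (fun x => ¬ ∃ i, graphSetDist G x (⋃₀ U i) = t i) : Finset V) : Set V),
        (G.induce _).Reachable x y → G.dist x.1 y.1 ≤ d * (R + 1)) :=
  asdim_separating_set_general G d ε hε R U hcover hdiam hsep H w hw
end

section
/- The Cayley graph of a finitely generated amenable group is weighted hyperfinite. -/
open Finset

/-- The (left) Cayley graph of `Γ` with respect to `S`: `x ~ y` iff `y = sx`
for some `s ∈ S`. -/
def cayleyGraph (Γ : Type*) [Group Γ] (S : Finset Γ) : SimpleGraph Γ :=
  SimpleGraph.fromRel (fun x y => ∃ s ∈ S, y = s * x)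

/-- Weighted hyperfiniteness of a graph. -/
def WeightedHyperfinite {V : Type*} [DecidableEq V] (G : SimpleGraph V) : Prop :=
  ∀ ε : ℝ, 0 < ε → ∃ K : ℕ, ∀ (L : Finset V) (w : V → ℝ), (∀ x, 0 ≤ w x) →
    ∃ M : Finset V, M ⊆ L ∧ (∑ x ∈ M, w x) ≤ ε * ∑ x ∈ L, w x ∧
      ∀ x : ((L \ M : Finset V) : Set V),
        {y : ((L \ M : Finset V) : Set V) |
          (G.induce ((L \ M : Finset V) : Set V)).Reachable x y}.ncard ≤ K

lemma cayley_adj' {Γ : Type*} [Group Γ] {S : Finset Γ} (hSsym : ∀ s ∈ S, s⁻¹ ∈ S)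
    {x y : Γ} (h : (cayleyGraph Γ S).Adj x y) : ∃ s ∈ S, y = s * x := by
  rw [cayleyGraph, SimpleGraph.fromRel_adj] at h
  obtain ⟨hne, h | h⟩ := h
  · exact h
  · obtain ⟨s, hs, hx⟩ := h
    exact ⟨s⁻¹, hSsym s hs, by rw [hx]; group⟩

lemma reach_transfer {V : Type*} (G : SimpleGraph V) (W C : Set V)
    (hcl : ∀ u, u ∈ C → ∀ v : V, v ∈ W → G.Adj u v → v ∈ C) :
    ∀ (x y : W), (G.induce W).Reachable x y → ∀ hx : (x : V) ∈ C,
      ∃ hy : (y : V) ∈ C, (G.induce C).Reachable ⟨x, hx⟩ ⟨y, hy⟩ := by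
  intro x y h
  obtain ⟨p⟩ := h
  induction p with
  | nil => exact fun hx => ⟨hx, SimpleGraph.Reachable.refl _⟩
  | @cons a b c h q ih =>
    intro ha
    have hadj : G.Adj (a : V) (b : V) := h
    have hb : (b : V) ∈ C := hcl _ ha _ b.2 hadj
    obtain ⟨hy, r⟩ := ih hb
    exact ⟨hy, (SimpleGraph.Adj.reachable
      (by exact hadj : (G.induce C).Adj ⟨a, ha⟩ ⟨b, hb⟩)).trans r⟩

lemma count_eq {Γ : Type*} [Group Γ] [DecidableEq Γ] (F L D : Finset Γ) (hD : D ⊆ F)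
    {x : Γ} (hx : x ∈ L) :
    ((L.biUnion (fun z => F.image (fun f => f⁻¹ * z))).filter (fun g => x * g⁻¹ ∈ D)).card
      = D.card := by
  apply Finset.card_bij (fun g _ => x * g⁻¹)
  · intro g hg
    exact (Finset.mem_filter.mp hg).2
  · intro g hg h hh he
    exact inv_injective (mul_left_cancel he)
  · intro d hd
    refine ⟨d⁻¹ * x, ?_, by group⟩
    refine Finset.mem_filter.mpr ⟨Finset.mem_biUnion.mpr ⟨x, hx, ?_⟩, ?_⟩
    · exact Finset.mem_image.mpr ⟨d, hD hd, rfl⟩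
    · have : x * (d⁻¹ * x)⁻¹ = d := by group
      rw [this]; exact hd

lemma sum_translates {Γ : Type*} [Group Γ] [DecidableEq Γ] (F L D : Finset Γ) (hD : D ⊆ F)
    (w : Γ → ℝ) :
    ∑ g ∈ L.biUnion (fun z => F.image (fun f => f⁻¹ * z)),
        ∑ x ∈ L.filter (fun x => x * g⁻¹ ∈ D), w x
      = (D.card : ℝ) * ∑ x ∈ L, w x := by
  set T := L.biUnion (fun z => F.image (fun f => f⁻¹ * z)) with hT
  calc ∑ g ∈ T, ∑ x ∈ L.filter (fun x => x * g⁻¹ ∈ D), w x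
      = ∑ g ∈ T, ∑ x ∈ L, if x * g⁻¹ ∈ D then w x else 0 := by
        refine Finset.sum_congr rfl fun g _ => ?_
        rw [Finset.sum_filter]
    _ = ∑ x ∈ L, ∑ g ∈ T, if x * g⁻¹ ∈ D then w x else 0 := Finset.sum_comm
    _ = ∑ x ∈ L, (D.card : ℝ) * w x := by
        refine Finset.sum_congr rfl fun x hx => ?_
        rw [← Finset.sum_filter, Finset.sum_const, count_eq F L D hD hx, nsmul_eq_mul]
    _ = (D.card : ℝ) * ∑ x ∈ L, w x := by rw [Finset.mul_sum]

lemma main_step {Γ : Type*} [Group Γ] [DecidableEq Γ] (S : Finset Γ)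
    (hSsym : ∀ s ∈ S, s⁻¹ ∈ S) (F B : Finset Γ)
    (hF : F.Nonempty) (hBF : B ⊆ F) (ε : ℝ)
    (hB : (B.card : ℝ) ≤ ε * F.card)
    (hint : ∀ f ∈ F, f ∉ B → ∀ s ∈ S, s * f ∈ F) :
    ∀ n (L : Finset Γ), L.card ≤ n → ∀ w : Γ → ℝ, (∀ x, 0 ≤ w x) →
    ∃ M : Finset Γ, M ⊆ L ∧ (∑ x ∈ M, w x) ≤ ε * ∑ x ∈ L, w x ∧
      ∀ x : ((L \ M : Finset Γ) : Set Γ),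
        {y : ((L \ M : Finset Γ) : Set Γ) |
          ((cayleyGraph Γ S).induce ((L \ M : Finset Γ) : Set Γ)).Reachable x y}.ncard
          ≤ F.card := by
  intro n
  induction n with
  | zero =>
    intro L hL w hw
    have hLe : L = ∅ := Finset.card_eq_zero.mp (Nat.le_zero.mp hL)
    subst hLe
    refine ⟨∅, Finset.Subset.refl _, by simp, ?_⟩
    rintro ⟨x, hx⟩
    simp at hx
  | succ n ih =>
    intro L hL w hw
    rcases L.eq_empty_or_nonempty with rfl | hLne
    · refine ⟨∅, Finset.Subset.refl _, by simp, ?_⟩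
      rintro ⟨x, hx⟩
      simp at hx
    set T := L.biUnion (fun z => F.image (fun f => f⁻¹ * z)) with hTdef
    have hTne : T.Nonempty := by
      obtain ⟨x, hx⟩ := hLne
      obtain ⟨f, hf⟩ := hF
      exact ⟨f⁻¹ * x, Finset.mem_biUnion.mpr ⟨x, hx, Finset.mem_image.mpr ⟨f, hf, rfl⟩⟩⟩
    have hwL : 0 ≤ ∑ x ∈ L, w x := Finset.sum_nonneg fun x _ => hw x
    have hsum : ∑ g ∈ T, ∑ x ∈ L.filter (fun x => x * g⁻¹ ∈ B), w x
        ≤ ∑ g ∈ T, ε * ∑ x ∈ L.filter (fun x => x * g⁻¹ ∈ F), w x := by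
      rw [← Finset.mul_sum, sum_translates F L B hBF w,
        sum_translates F L F (Finset.Subset.refl F) w]
      calc (B.card : ℝ) * ∑ x ∈ L, w x ≤ (ε * F.card) * ∑ x ∈ L, w x :=
            mul_le_mul_of_nonneg_right hB hwL
        _ = ε * ((F.card : ℝ) * ∑ x ∈ L, w x) := by ring
    obtain ⟨g, hgT, hg⟩ := Finset.exists_le_of_sum_le hTne hsum
    set A := L.filter (fun x => x * g⁻¹ ∈ F) with hAdef
    set Bg := L.filter (fun x => x * g⁻¹ ∈ B) with hBgdef
    have hBgA : Bg ⊆ A := by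
      intro x hx
      rw [hBgdef, Finset.mem_filter] at hx
      exact Finset.mem_filter.mpr ⟨hx.1, hBF hx.2⟩
    have hAne : A.Nonempty := by
      rw [hTdef] at hgT
      obtain ⟨z, hz, hzi⟩ := Finset.mem_biUnion.mp hgT
      obtain ⟨f, hf, rfl⟩ := Finset.mem_image.mp hzi
      refine ⟨z, Finset.mem_filter.mpr ⟨hz, ?_⟩⟩
      have : z * (f⁻¹ * z)⁻¹ = f := by group
      rw [this]; exact hf
    have hAL : A ⊆ L := Finset.filter_subset _ _
    have hL' : (L \ A).card ≤ n := by
      have h1 : (L \ A).card = L.card - A.card := Finset.card_sdiff_of_subset hAL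
      have h2 : 1 ≤ A.card := Finset.card_pos.mpr hAne
      omega
    obtain ⟨M', hM'L, hM'w, hM'comp⟩ := ih (L \ A) hL' w hw
    set M := Bg ∪ M' with hMdef
    have hdisj : Disjoint Bg M' :=
      Finset.disjoint_left.mpr fun x hx hx' =>
        (Finset.mem_sdiff.mp (hM'L hx')).2 (hBgA hx)
    have hML : M ⊆ L :=
      Finset.union_subset (Finset.filter_subset _ _)
        (hM'L.trans (Finset.sdiff_subset))
    refine ⟨M, hML, ?_, ?_⟩
    · rw [hMdef, Finset.sum_union hdisj]
      have h2 : ∑ x ∈ (L \ A), w x + ∑ x ∈ A, w x = ∑ x ∈ L, w x :=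
        Finset.sum_sdiff hAL
      calc ∑ x ∈ Bg, w x + ∑ x ∈ M', w x
          ≤ ε * ∑ x ∈ A, w x + ε * ∑ x ∈ (L \ A), w x := add_le_add hg hM'w
        _ = ε * ∑ x ∈ L, w x := by rw [← h2]; ring
    · -- components
      set W : Set Γ := ((L \ M : Finset Γ) : Set Γ) with hWdef
      set G := cayleyGraph Γ S with hGdef
      have hC1 : ∀ u, u ∈ ((A \ Bg : Finset Γ) : Set Γ) → ∀ v : Γ, v ∈ W →
          G.Adj u v → v ∈ ((A \ Bg : Finset Γ) : Set Γ) := by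
        intro u hu v hv hadj
        rw [Finset.coe_sdiff, Set.mem_diff, Finset.mem_coe, Finset.mem_coe] at hu ⊢
        obtain ⟨huA, huB⟩ := hu
        rw [hAdef, Finset.mem_filter] at huA
        have huB' : u * g⁻¹ ∉ B := fun hc =>
          huB (Finset.mem_filter.mpr ⟨huA.1, hc⟩)
        obtain ⟨s, hs, rfl⟩ := cayley_adj' hSsym hadj
        rw [hWdef, Finset.coe_sdiff, Set.mem_diff, Finset.mem_coe, Finset.mem_coe] at hv
        have hvF : s * u * g⁻¹ ∈ F := by
          have := hint _ huA.2 huB' s hs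
          rwa [← mul_assoc] at this
        constructor
        · exact Finset.mem_filter.mpr ⟨hv.1, hvF⟩
        · intro hc
          exact hv.2 (Finset.mem_union_left _ hc)
      have hC2 : ∀ u, u ∈ (((L \ A) \ M' : Finset Γ) : Set Γ) → ∀ v : Γ, v ∈ W →
          G.Adj u v → v ∈ (((L \ A) \ M' : Finset Γ) : Set Γ) := by
        intro u hu v hv hadj
        rw [Finset.mem_coe, Finset.mem_sdiff, Finset.mem_sdiff] at hu ⊢
        have hvW : v ∈ L ∧ v ∉ M := Finset.mem_sdiff.mp hv
        have hvM' : v ∉ M' := fun hc => hvW.2 (Finset.mem_union_right _ hc)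
        have hvA : v ∉ A := by
          intro hc
          have hvAB : v ∈ ((A \ Bg : Finset Γ) : Set Γ) := by
            rw [Finset.coe_sdiff, Set.mem_diff, Finset.mem_coe, Finset.mem_coe]
            exact ⟨hc, fun hb => hvW.2 (Finset.mem_union_left _ hb)⟩
          have huW : u ∈ W := by
            rw [hWdef, Finset.mem_coe, Finset.mem_sdiff]
            refine ⟨hu.1.1, ?_⟩
            intro hc'
            rcases Finset.mem_union.mp hc' with h | h
            · exact hu.1.2 (hBgA h)
            · exact hu.2 h
          have := hC1 v hvAB u huW hadj.symm
          rw [Finset.coe_sdiff, Set.mem_diff, Finset.mem_coe] at this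
          exact hu.1.2 this.1
        exact ⟨⟨hvW.1, hvA⟩, hvM'⟩
      intro x
      have hxW : (x : Γ) ∈ W := x.2
      have hxsplit : (x : Γ) ∈ ((A \ Bg : Finset Γ) : Set Γ) ∨
          (x : Γ) ∈ (((L \ A) \ M' : Finset Γ) : Set Γ) := by
        rw [Finset.mem_coe, Finset.mem_coe, Finset.mem_sdiff, Finset.mem_sdiff,
          Finset.mem_sdiff]
        have hxW' : (x : Γ) ∈ L ∧ (x : Γ) ∉ M := Finset.mem_sdiff.mp hxW
        by_cases hxA : (x : Γ) ∈ A
        · exact Or.inl ⟨hxA, fun hb => hxW'.2 (Finset.mem_union_left _ hb)⟩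
        · exact Or.inr ⟨⟨hxW'.1, hxA⟩, fun hm => hxW'.2 (Finset.mem_union_right _ hm)⟩
      rcases hxsplit with hx | hx
      · have hsub : ∀ y ∈ {y : W | (G.induce W).Reachable x y},
            (y : Γ) ∈ ((A \ Bg : Finset Γ) : Set Γ) := by
          intro y hy
          obtain ⟨hy', _⟩ := reach_transfer G W _ hC1 x y hy hx
          exact hy'
        calc {y : W | (G.induce W).Reachable x y}.ncard
            ≤ ((A \ Bg : Finset Γ) : Set Γ).ncard :=
              Set.ncard_le_ncard_of_injOn Subtype.val hsub
                (Subtype.val_injective.injOn) (Set.toFinite _)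
          _ = (A \ Bg).card := Set.ncard_coe_finset _
          _ ≤ A.card := Finset.card_le_card (Finset.sdiff_subset)
          _ ≤ F.card := by
              apply Finset.card_le_card_of_injOn (fun x => x * g⁻¹)
              · intro a ha
                exact (Finset.mem_filter.mp ha).2
              · intro a _ b _ h
                exact mul_right_cancel h
      · set C : Set Γ := (((L \ A) \ M' : Finset Γ) : Set Γ) with hCdef
        set x' : C := ⟨(x : Γ), hx⟩ with hx'def
        set t : Set Γ :=
          Subtype.val '' {y : C | (G.induce C).Reachable x' y} with htdef
        have hsub : ∀ y ∈ {y : W | (G.induce W).Reachable x y}, (y : Γ) ∈ t := by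
          intro y hy
          obtain ⟨hy', hr⟩ := reach_transfer G W C hC2 x y hy hx
          exact ⟨⟨(y : Γ), hy'⟩, hr, rfl⟩
        calc {y : W | (G.induce W).Reachable x y}.ncard
            ≤ t.ncard :=
              Set.ncard_le_ncard_of_injOn Subtype.val hsub
                (Subtype.val_injective.injOn)
                ((Set.toFinite _).image _)
          _ = {y : C | (G.induce C).Reachable x' y}.ncard :=
              Set.ncard_image_of_injective _ Subtype.val_injective
          _ ≤ F.card := hM'comp x'

/-- The Cayley graph of a finitely generated amenable group (amenability being
witnessed by a Følner sequence) is weighted hyperfinite. -/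
theorem cayley_weightedHyperfinite_of_amenable
    {Γ : Type*} [Group Γ] [DecidableEq Γ]
    (S : Finset Γ) (hSsym : ∀ s ∈ S, s⁻¹ ∈ S)
    (hSgen : Subgroup.closure (S : Set Γ) = ⊤)
    (hFolner : ∃ F : ℕ → Finset Γ, (∀ n, (F n).Nonempty) ∧
      ∀ ε : ℝ, 0 < ε → ∀ L : Finset Γ, ∃ N : ℕ, ∀ n ≥ N, ∀ g ∈ L,
        (((F n).image (fun x => g * x) ∪ F n).card : ℝ) < (1 + ε) * (F n).card) :
    WeightedHyperfinite (cayleyGraph Γ S) := by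
  intro ε hε
  obtain ⟨Fs, hFne, hFol⟩ := hFolner
  set ε' : ℝ := ε / (S.card + 1) with hε'def
  have hSpos : (0 : ℝ) < S.card + 1 := by positivity
  have hε' : 0 < ε' := div_pos hε hSpos
  obtain ⟨N, hN⟩ := hFol ε' hε' S
  set F := Fs N with hFdef
  set B := F.filter (fun f => ∃ s ∈ S, s * f ∉ F) with hBdef
  have hBF : B ⊆ F := Finset.filter_subset _ _
  have hint : ∀ f ∈ F, f ∉ B → ∀ s ∈ S, s * f ∈ F := by
    intro f hf hfB s hs
    by_contra hc
    exact hfB (Finset.mem_filter.mpr ⟨hf, s, hs, hc⟩)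
  have hBcard : (B.card : ℝ) ≤ ε * F.card := by
    have h1 : B ⊆ S.biUnion (fun s => F.filter fun f => s * f ∉ F) := by
      intro f hf
      obtain ⟨hfF, s, hs, hsf⟩ := Finset.mem_filter.mp hf
      exact Finset.mem_biUnion.mpr ⟨s, hs, Finset.mem_filter.mpr ⟨hfF, hsf⟩⟩
    have h2 : ∀ s ∈ S, ((F.filter fun f => s * f ∉ F).card : ℝ) ≤ ε' * F.card := by
      intro s hs
      have himg : (F.filter fun f => s * f ∉ F).image (fun f => s * f)
          = F.image (fun x => s * x) \ F := by
        ext y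
        simp only [Finset.mem_image, Finset.mem_filter, Finset.mem_sdiff]
        constructor
        · rintro ⟨f, ⟨hfF, hsf⟩, rfl⟩
          exact ⟨⟨f, hfF, rfl⟩, hsf⟩
        · rintro ⟨⟨f, hfF, rfl⟩, hy⟩
          exact ⟨f, ⟨hfF, hy⟩, rfl⟩
      have hcard : (F.filter fun f => s * f ∉ F).card
          = (F.image (fun x => s * x) \ F).card := by
        rw [← himg, Finset.card_image_of_injective _ (mul_right_injective s)]
      have hsd : ((F.image (fun x => s * x) \ F).card : ℝ)
          = ((F.image (fun x => s * x) ∪ F).card : ℝ) - F.card := by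
        have := Finset.card_sdiff_add_card (F.image (fun x => s * x)) F
        have : ((F.image (fun x => s * x) \ F).card : ℝ) + F.card
            = ((F.image (fun x => s * x) ∪ F).card : ℝ) := by
          exact_mod_cast congrArg (Nat.cast : ℕ → ℝ) this
        linarith
      have hbound := hN N le_rfl s hs
      rw [hcard, hsd]
      have : ((F.image (fun x => s * x) ∪ F).card : ℝ) < (1 + ε') * F.card := hbound
      nlinarith [this]
    calc (B.card : ℝ) ≤ ((S.biUnion (fun s => F.filter fun f => s * f ∉ F)).card : ℝ) := by
          exact_mod_cast Finset.card_le_card h1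
      _ ≤ ∑ s ∈ S, ((F.filter fun f => s * f ∉ F).card : ℝ) := by
          exact_mod_cast Finset.card_biUnion_le
      _ ≤ ∑ s ∈ S, ε' * F.card := Finset.sum_le_sum h2
      _ = (S.card : ℝ) * (ε' * F.card) := by rw [Finset.sum_const, nsmul_eq_mul]
      _ ≤ ε * F.card := by
          have h3 : (S.card : ℝ) * ε' ≤ ε := by
            rw [hε'def]
            rw [div_eq_mul_inv]
            have h4 : (S.card : ℝ) ≤ S.card + 1 := by linarith
            calc (S.card : ℝ) * (ε * ((S.card : ℝ) + 1)⁻¹)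
                = ε * ((S.card : ℝ) / ((S.card : ℝ) + 1)) := by ring
              _ ≤ ε * 1 := by
                  apply mul_le_mul_of_nonneg_left _ hε.le
                  rw [div_le_one hSpos]
                  exact h4
              _ = ε := mul_one ε
          have h5 : (0 : ℝ) ≤ F.card := Nat.cast_nonneg _
          nlinarith [h3, h5]
  refine ⟨F.card, fun L w hw => ?_⟩
  exact main_step S hSsym F B (hFne N) hBF ε hBcard hint L.card L le_rfl w hw
end

section
/- Let Γ be a finitely generated group with Cayley graph G and Følner set F ⊆ Γ containing the identity, let H be a finite induced subgraph with weight w, and let R ⊆ V(G) be a random subset where each vertex lies in R independently with probability p. Define S = ∂F·R ∩ V(H) and B = V(H) ∖ F·R. Then the expected weight satisfies E[w(S) + w(B)] = w(H)·(1 − (1−p)^{|∂F|} + (1−p)^{|F|}), and for any realization of R, every component of H ∖ (B ∪ S) has at most |F| vertices. -/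
lemma bernoulli_total {α : Type*} [DecidableEq α] (p : ℝ) (U : Finset α) :
    ∑ R ∈ U.powerset, p ^ R.card * (1 - p) ^ (U.card - R.card) = 1 := by
  have h := Finset.prod_add (fun _ : α => p) (fun _ => (1 - p)) U
  simp only [Finset.prod_const] at h
  rw [show p + (1 - p) = 1 by ring, one_pow] at h
  calc ∑ R ∈ U.powerset, p ^ R.card * (1 - p) ^ (U.card - R.card)
      = ∑ R ∈ U.powerset, p ^ R.card * (1 - p) ^ (U \ R).card := by
        refine Finset.sum_congr rfl fun R hR => ?_
        rw [Finset.card_sdiff_of_subset (Finset.mem_powerset.1 hR)]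
    _ = 1 := h.symm

lemma bernoulli_empty {α : Type*} [DecidableEq α] (p : ℝ) (W T : Finset α) (hT : T ⊆ W) :
    ∑ R ∈ W.powerset, (if R ∩ T = ∅ then p ^ R.card * (1 - p) ^ (W.card - R.card) else 0)
      = (1 - p) ^ T.card := by
  rw [← Finset.sum_filter]
  have hfil : W.powerset.filter (fun R => R ∩ T = ∅) = (W \ T).powerset := by
    ext R
    simp only [Finset.mem_filter, Finset.mem_powerset, Finset.subset_sdiff,
      ← Finset.disjoint_iff_inter_eq_empty, and_comm]
  rw [hfil]
  have key : ∀ R ∈ (W \ T).powerset,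
      p ^ R.card * (1 - p) ^ (W.card - R.card)
        = (1 - p) ^ T.card * (p ^ R.card * (1 - p) ^ ((W \ T).card - R.card)) := by
    intro R hR
    rw [Finset.mem_powerset] at hR
    have h1 : R.card ≤ (W \ T).card := Finset.card_le_card hR
    have h2 : (W \ T).card = W.card - T.card := Finset.card_sdiff_of_subset hT
    have h3 : T.card ≤ W.card := Finset.card_le_card hT
    have : W.card - R.card = ((W \ T).card - R.card) + T.card := by omega
    rw [this, pow_add]; ring
  rw [Finset.sum_congr rfl key, ← Finset.mul_sum, bernoulli_total, mul_one]

lemma bernoulli_nonempty {α : Type*} [DecidableEq α] (p : ℝ) (W T : Finset α) (hT : T ⊆ W) :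
    ∑ R ∈ W.powerset, (if (R ∩ T).Nonempty then p ^ R.card * (1 - p) ^ (W.card - R.card) else 0)
      = 1 - (1 - p) ^ T.card := by
  have h : ∀ R ∈ W.powerset,
      (if (R ∩ T).Nonempty then p ^ R.card * (1 - p) ^ (W.card - R.card) else 0)
        = p ^ R.card * (1 - p) ^ (W.card - R.card)
          - (if R ∩ T = ∅ then p ^ R.card * (1 - p) ^ (W.card - R.card) else 0) := by
    intro R _
    by_cases hc : (R ∩ T).Nonempty
    · rw [if_pos hc, if_neg (Finset.nonempty_iff_ne_empty.1 hc), sub_zero]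
    · rw [if_neg hc, if_pos (Finset.not_nonempty_iff_eq_empty.1 hc), sub_self]
  rw [Finset.sum_congr rfl h, Finset.sum_sub_distrib, bernoulli_total, bernoulli_empty p W T hT]

lemma aux_part2 {Γ : Type*} [Group Γ] [DecidableEq Γ]
    (S : Finset Γ) (hSsym : ∀ s ∈ S, s⁻¹ ∈ S)
    (F Fb H : Finset Γ) (hFb : Fb = F.filter (fun x => ∃ s ∈ S, s * x ∉ F))
    (R : Finset Γ) (A : Set Γ) (v : Γ) (hv : v ∈ R)
    (hA : ∀ z ∈ A, z ∈ H ∧ z ∉ H.filter (fun x => ∃ f ∈ Fb, ∃ u ∈ R, x = f * u))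
    (x : A) (f : Γ) (hf : f ∈ F) (hxfv : (x : Γ) = f * v) :
    {y : A | ((cayleyGraph Γ S).induce A).Reachable x y}.ncard ≤ F.card := by
  have key : ∀ (z y : A) (wlk : ((cayleyGraph Γ S).induce A).Walk z y),
      (z : Γ) ∈ F.image (· * v) → (y : Γ) ∈ F.image (· * v) := by
    intro z y wlk
    induction wlk with
    | nil => exact id
    | @cons a b c hab q ih =>
      intro ha
      refine ih ?_
      have hadj : (cayleyGraph Γ S).Adj (a : Γ) (b : Γ) := hab
      rw [cayleyGraph, SimpleGraph.fromRel_adj] at hadj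
      obtain ⟨hne, hcase⟩ := hadj
      obtain ⟨s, hs, hbs⟩ : ∃ s ∈ S, (b : Γ) = s * (a : Γ) := by
        rcases hcase with ⟨s, hs, h⟩ | ⟨s, hs, h⟩
        · exact ⟨s, hs, h⟩
        · exact ⟨s⁻¹, hSsym s hs, by rw [h]; group⟩
      obtain ⟨g, hg, hga⟩ := Finset.mem_image.1 ha
      by_cases hsg : s * g ∈ F
      · exact Finset.mem_image.2 ⟨s * g, hsg, by rw [hbs, ← hga]; simp [mul_assoc]⟩
      · exfalso
        have hgFb : g ∈ Fb := by
          rw [hFb]; exact Finset.mem_filter.2 ⟨hg, s, hs, hsg⟩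
        obtain ⟨haH, haS⟩ := hA (a : Γ) a.2
        exact haS (Finset.mem_filter.2 ⟨haH, g, hgFb, v, hv, hga.symm⟩)
  have hxFv : (x : Γ) ∈ F.image (· * v) := Finset.mem_image.2 ⟨f, hf, hxfv.symm⟩
  have hsub : Subtype.val '' {y : A | ((cayleyGraph Γ S).induce A).Reachable x y}
      ⊆ ↑(F.image (· * v)) := by
    rintro _ ⟨y, hy, rfl⟩
    obtain ⟨wlk⟩ := hy
    exact key x y wlk hxFv
  calc {y : A | ((cayleyGraph Γ S).induce A).Reachable x y}.ncard
      = (Subtype.val '' {y : A | ((cayleyGraph Γ S).induce A).Reachable x y}).ncard :=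
        (Set.ncard_image_of_injective _ Subtype.val_injective).symm
    _ ≤ (↑(F.image (· * v)) : Set Γ).ncard :=
        Set.ncard_le_ncard hsub (Finset.finite_toSet _)
    _ = (F.image (· * v)).card := Set.ncard_coe_finset _
    _ ≤ F.card := Finset.card_image_le

/-- Random separation in the Cayley graph of a finitely generated group: for a
Følner set `F ∋ 1` with inner boundary `∂F`, a finite subgraph `H` with weight
`w`, and a `p`-Bernoulli random subset `R` (of a finite set `W` containing all
relevant vertices), with `S_R = ∂F·R ∩ V(H)` and `B_R = V(H) ∖ F·R` one has
`E[w(S_R) + w(B_R)] = w(H)·(1 − (1−p)^{|∂F|} + (1−p)^{|F|})`, and for every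
realization `R` each component of `H ∖ (B_R ∪ S_R)` has at most `|F|`
vertices. -/
theorem folner_random_separation
    {Γ : Type*} [Group Γ] [DecidableEq Γ]
    (S : Finset Γ) (hSsym : ∀ s ∈ S, s⁻¹ ∈ S)
    (hSgen : Subgroup.closure (S : Set Γ) = ⊤)
    (F : Finset Γ) (hF1 : (1 : Γ) ∈ F)
    (Fb : Finset Γ) (hFb : Fb = F.filter (fun x => ∃ s ∈ S, s * x ∉ F))
    (H : Finset Γ) (w : Γ → ℝ) (hw : ∀ x, 0 ≤ w x)
    (p : ℝ) (hp0 : 0 ≤ p) (hp1 : p ≤ 1)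
    (W : Finset Γ) (hW : ∀ x ∈ H, ∀ f ∈ F, f⁻¹ * x ∈ W)
    (SR BR : Finset Γ → Finset Γ)
    (hSR : ∀ R, SR R = H.filter (fun x => ∃ f ∈ Fb, ∃ v ∈ R, x = f * v))
    (hBR : ∀ R, BR R = H.filter (fun x => ¬ ∃ f ∈ F, ∃ v ∈ R, x = f * v)) :
    (∑ R ∈ W.powerset, p ^ R.card * (1 - p) ^ (W.card - R.card) *
        ((∑ x ∈ SR R, w x) + (∑ x ∈ BR R, w x))
      = (∑ x ∈ H, w x) * (1 - (1 - p) ^ Fb.card + (1 - p) ^ F.card)) ∧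
    (∀ R : Finset Γ,
      ∀ x : ((H \ (BR R ∪ SR R) : Finset Γ) : Set Γ),
        {y : ((H \ (BR R ∪ SR R) : Finset Γ) : Set Γ) |
          ((cayleyGraph Γ S).induce ((H \ (BR R ∪ SR R) : Finset Γ) : Set Γ)).Reachable x y}.ncard
          ≤ F.card) := by
  have hFbF : Fb ⊆ F := by rw [hFb]; exact Finset.filter_subset _ _
  constructor
  · -- Part 1: expectation
    have hiffS : ∀ (x : Γ) (R : Finset Γ), (∃ f ∈ Fb, ∃ v ∈ R, x = f * v)
        ↔ (R ∩ Fb.image (fun f => f⁻¹ * x)).Nonempty := by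
      intro x R
      constructor
      · rintro ⟨f, hf, v, hv, rfl⟩
        exact ⟨v, Finset.mem_inter.2 ⟨hv, Finset.mem_image.2 ⟨f, hf, by group⟩⟩⟩
      · rintro ⟨v, hv⟩
        obtain ⟨hvR, hvI⟩ := Finset.mem_inter.1 hv
        obtain ⟨f, hf, rfl⟩ := Finset.mem_image.1 hvI
        exact ⟨f, hf, f⁻¹ * x, hvR, by group⟩
    have hiffB : ∀ (x : Γ) (R : Finset Γ), (¬ ∃ f ∈ F, ∃ v ∈ R, x = f * v)
        ↔ R ∩ F.image (fun f => f⁻¹ * x) = ∅ := by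
      intro x R
      rw [← Finset.not_nonempty_iff_eq_empty, not_iff_not]
      constructor
      · rintro ⟨f, hf, v, hv, rfl⟩
        exact ⟨v, Finset.mem_inter.2 ⟨hv, Finset.mem_image.2 ⟨f, hf, by group⟩⟩⟩
      · rintro ⟨v, hv⟩
        obtain ⟨hvR, hvI⟩ := Finset.mem_inter.1 hv
        obtain ⟨f, hf, rfl⟩ := Finset.mem_image.1 hvI
        exact ⟨f, hf, f⁻¹ * x, hvR, by group⟩
    have hinj : ∀ x : Γ, Function.Injective (fun f : Γ => f⁻¹ * x) :=
      fun x f₁ f₂ h => inv_injective (mul_right_cancel h)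
    calc ∑ R ∈ W.powerset, p ^ R.card * (1 - p) ^ (W.card - R.card) *
          ((∑ x ∈ SR R, w x) + (∑ x ∈ BR R, w x))
        = ∑ R ∈ W.powerset, ∑ x ∈ H,
            ((if (R ∩ Fb.image (fun f => f⁻¹ * x)).Nonempty
                then p ^ R.card * (1 - p) ^ (W.card - R.card) else 0) * w x
            + (if R ∩ F.image (fun f => f⁻¹ * x) = ∅
                then p ^ R.card * (1 - p) ^ (W.card - R.card) else 0) * w x) := by
          refine Finset.sum_congr rfl fun R _ => ?_
          rw [hSR, hBR, Finset.sum_filter, Finset.sum_filter, mul_add, Finset.mul_sum,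
            Finset.mul_sum, ← Finset.sum_add_distrib]
          refine Finset.sum_congr rfl fun x hx => ?_
          rw [if_congr (hiffS x R) rfl rfl, if_congr (hiffB x R) rfl rfl]
          congr 1 <;> (split_ifs <;> ring)
      _ = ∑ x ∈ H, ∑ R ∈ W.powerset,
            ((if (R ∩ Fb.image (fun f => f⁻¹ * x)).Nonempty
                then p ^ R.card * (1 - p) ^ (W.card - R.card) else 0) * w x
            + (if R ∩ F.image (fun f => f⁻¹ * x) = ∅
                then p ^ R.card * (1 - p) ^ (W.card - R.card) else 0) * w x) :=
          Finset.sum_comm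
      _ = ∑ x ∈ H, w x * (1 - (1 - p) ^ Fb.card + (1 - p) ^ F.card) := by
          refine Finset.sum_congr rfl fun x hx => ?_
          rw [Finset.sum_add_distrib, ← Finset.sum_mul, ← Finset.sum_mul]
          have hTS : Fb.image (fun f => f⁻¹ * x) ⊆ W := by
            intro v hv
            obtain ⟨f, hf, rfl⟩ := Finset.mem_image.1 hv
            exact hW x hx f (hFbF hf)
          have hTB : F.image (fun f => f⁻¹ * x) ⊆ W := by
            intro v hv
            obtain ⟨f, hf, rfl⟩ := Finset.mem_image.1 hv
            exact hW x hx f hf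
          rw [bernoulli_nonempty p W _ hTS, bernoulli_empty p W _ hTB,
            Finset.card_image_of_injective _ (hinj x), Finset.card_image_of_injective _ (hinj x)]
          ring
      _ = (∑ x ∈ H, w x) * (1 - (1 - p) ^ Fb.card + (1 - p) ^ F.card) := by
          rw [Finset.sum_mul]
  · -- Part 2: small components
    intro R x
    have hx := x.2
    simp only [Finset.coe_sdiff, Finset.coe_union, Set.mem_diff, Set.mem_union,
      Finset.mem_coe] at hx
    obtain ⟨hxH, hxBS⟩ := hx
    push_neg at hxBS
    obtain ⟨hxB, hxS⟩ := hxBS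
    have hxFR : ∃ f ∈ F, ∃ v ∈ R, (x : Γ) = f * v := by
      by_contra hcon
      have hmem : (x : Γ) ∈ H.filter (fun y => ¬ ∃ f ∈ F, ∃ v ∈ R, y = f * v) :=
        Finset.mem_filter.2 ⟨hxH, hcon⟩
      rw [← hBR R] at hmem
      exact hxB hmem
    obtain ⟨f, hf, v, hv, hxfv⟩ := hxFR
    refine aux_part2 S hSsym F Fb H hFb R _ v hv ?_ x f hf hxfv
    intro z hz
    simp only [Finset.coe_sdiff, Finset.coe_union, Set.mem_diff, Set.mem_union,
      Finset.mem_coe] at hz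
    obtain ⟨hzH, hzBS⟩ := hz
    push_neg at hzBS
    exact ⟨hzH, by rw [← hSR]; exact hzBS.2⟩
end

section
/- For any group element g ≠ e of a group Γ, there exists a partition of Γ into three sets A¹, A², A³ such that gAⁱ ∩ Aⁱ = ∅ for i = 1, 2, 3. -/
section aux
variable {Γ : Type*} [Group Γ] (g : Γ)

private def tcSetoid : Setoid Γ :=
  ⟨fun x y => ∃ k : ℤ, x = g ^ k * y,
   fun x => ⟨0, by simp⟩,
   fun ⟨k, hk⟩ => ⟨-k, by rw [hk]; group⟩,
   fun ⟨k, hk⟩ ⟨m, hm⟩ => ⟨k + m, by rw [hk, hm]; group⟩⟩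

private noncomputable def tcRep (x : Γ) : Γ :=
  (Quotient.mk (tcSetoid g) x).out

private lemma tcRep_spec (x : Γ) : ∃ k : ℤ, x = g ^ k * tcRep g x := by
  have h : (tcSetoid g) (tcRep g x) x := Quotient.exact (Quotient.out_eq _)
  obtain ⟨k, hk⟩ := h
  exact ⟨-k, by rw [hk]; group⟩

private lemma tcRep_mul (x : Γ) : tcRep g (g * x) = tcRep g x := by
  unfold tcRep
  congr 1
  exact Quotient.sound ⟨1, by group⟩

private noncomputable def tcD (x : Γ) : ℤ := (tcRep_spec g x).choose

private lemma tcD_spec (x : Γ) : x = g ^ tcD g x * tcRep g x := (tcRep_spec g x).choose_spec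

private lemma tcD_mul (x : Γ) : tcD g (g * x) ≡ tcD g x + 1 [ZMOD orderOf g] := by
  have h1 : g * x = g ^ tcD g (g * x) * tcRep g x := by
    rw [← tcRep_mul g x]; exact tcD_spec g (g * x)
  have h2 : g * x = g ^ (tcD g x + 1) * tcRep g x := by
    conv_lhs => rw [tcD_spec g x]
    group
  have : g ^ tcD g (g * x) = g ^ (tcD g x + 1) := mul_right_cancel (h1.symm.trans h2)
  exact zpow_eq_zpow_iff_modEq.mp this

/-- the coloring of integers -/
private def tcC (n k : ℤ) : Fin 3 :=
  if n = 0 then (if k % 2 = 0 then 0 else 1)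
  else if k % n = n - 1 then 2 else if (k % n) % 2 = 0 then 0 else 1

private lemma tcC_ne (n : ℤ) (hn : n ≠ 1) (hn0 : 0 ≤ n) {k m : ℤ}
    (h : k ≡ m + 1 [ZMOD n]) : tcC n k ≠ tcC n m := by
  unfold tcC
  rcases eq_or_ne n 0 with rfl | hne
  · simp only [if_pos rfl]
    have : k = m + 1 := by simpa [Int.ModEq] using h
    subst this
    rcases Int.emod_two_eq_zero_or_one m with hm | hm
    · have hk : (m + 1) % 2 = 1 := by omega
      simp [hm, hk]
    · have hk : (m + 1) % 2 = 0 := by omega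
      simp [hm, hk]
  · have hn2 : 2 ≤ n := by omega
    simp only [if_neg hne]
    have hk : k % n = (m + 1) % n := h
    have hb0 : 0 ≤ m % n := Int.emod_nonneg m hne
    have hb1 : m % n < n := Int.emod_lt_of_pos m (by omega)
    have hadd : (m + 1) % n = (m % n + 1) % n := by
      rw [show m + 1 = m % n + 1 + n * (m / n) by
        rw [add_right_comm, Int.emod_add_mul_ediv]]
      exact Int.add_mul_emod_self_left (a := m % n + 1) (b := n) (c := m / n)
    rcases eq_or_ne (m % n) (n - 1) with hb | hb
    · have : (m + 1) % n = 0 := by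
        rw [hadd, hb]; simp
      rw [hk, this]
      simp only [if_pos hb]
      have h0 : (0:ℤ) ≠ n - 1 := by omega
      simp [h0]
    · have : (m + 1) % n = m % n + 1 := by
        rw [hadd]
        exact Int.emod_eq_of_lt (by omega) (by omega)
      rw [hk, this]
      simp only [if_neg hb]
      rcases eq_or_ne (m % n + 1) (n - 1) with ha | ha
      · simp only [if_pos ha]
        split <;> decide
      · simp only [if_neg ha]
        rcases Int.emod_two_eq_zero_or_one (m % n) with hm2 | hm2
        · have hk2 : (m % n + 1) % 2 = 1 := by omega
          simp [hm2, hk2]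
        · have hk2 : (m % n + 1) % 2 = 0 := by omega
          simp [hm2, hk2]

end aux

/-- For any nonidentity element `g` of a group `Γ` there is a partition of `Γ`
into three sets `A 0, A 1, A 2` with `gAⁱ ∩ Aⁱ = ∅` for each `i`. -/
theorem three_coloring_translation
    {Γ : Type*} [Group Γ] (g : Γ) (hg : g ≠ 1) :
    ∃ A : Fin 3 → Set Γ,
      (∀ x : Γ, ∃ i, x ∈ A i) ∧
      (∀ i j, i ≠ j → Disjoint (A i) (A j)) ∧
      (∀ i, Disjoint ((fun x => g * x) '' A i) (A i)) := by
  classical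
  set n : ℤ := (orderOf g : ℤ) with hn
  have hn1 : n ≠ 1 := by
    simp only [hn, Ne, Nat.cast_eq_one]
    exact fun h => hg (orderOf_eq_one_iff.mp h)
  have hn0 : 0 ≤ n := Int.natCast_nonneg _
  refine ⟨fun i => {x | tcC n (tcD g x) = i}, fun x => ⟨_, rfl⟩, ?_, ?_⟩
  · intro i j hij
    rw [Set.disjoint_left]
    rintro x (hx : _ = i) (hx' : _ = j)
    exact hij (hx ▸ hx')
  · intro i
    rw [Set.disjoint_left]
    rintro y ⟨x, (hx : _ = i), rfl⟩ (hy : _ = i)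
    exact tcC_ne n hn1 hn0 (tcD_mul g x) (hy.trans hx.symm)
end

section
/- In a nonamenable finitely generated group Γ with Cayley graph G, there exists D > 1 such that for all x ∈ Γ, r ≥ 1, and 0 ≤ i < r, the sphere sizes satisfy 1/D < |S_{i+1}(x)| / |S_i(x)| < D, where S_i(x) = {y : d(x,y) = i}. -/
/-- Amenability of a finitely generated group, via existence of a Følner
sequence. -/
def IsAmenableFG (Γ : Type*) [Group Γ] [DecidableEq Γ] : Prop :=
  ∃ F : ℕ → Finset Γ, (∀ n, (F n).Nonempty) ∧
    ∀ ε : ℝ, 0 < ε → ∀ L : Finset Γ, ∃ N : ℕ, ∀ n ≥ N, ∀ g ∈ L,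
      (((F n).image (fun x => g * x) ∪ F n).card : ℝ) < (1 + ε) * (F n).card

/-!
Write `T = insert 1 S`. The ball of radius `n` about `x` is `T ^ n * x`, so spheres are finite and
`|S_n(x)| = |S_n(1)|`. Every point of `S_{n+1}(1)` is `t * z` with `t ∈ T` and `z ∈ S_n(1)`, whence
`|S_{n+1}| ≤ |T| |S_n|`. Nonamenability gives `ε > 0` and `m` such that every nonempty finite `F`
satisfies `|g F ∪ F| ≥ (1 + ε) |F|` for some `g ∈ T ^ m`. For `F = T ^ n` the union lies in
`T ^ (n + m)`, and by the upper bound `|T ^ (n + m)| - |T ^ n| ≤ (∑ j < m, |T| ^ j) |S_{n+1}|`;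
since `S_n ⊆ T ^ n`, this gives `ε |S_n| ≤ (∑ j < m, |T| ^ j) |S_{n+1}|`. Finite groups are
amenable, so the group is infinite and no sphere is empty.
-/

open Finset SimpleGraph
open scoped Pointwise

section Adjacency

variable {Γ : Type*} [Group Γ] {S : Finset Γ}

lemma cayleyGraph_adj_iff (hS : ∀ s ∈ S, s⁻¹ ∈ S) {x y : Γ} :
    (cayleyGraph Γ S).Adj x y ↔ x ≠ y ∧ y * x⁻¹ ∈ S := by
  simp only [cayleyGraph, fromRel_adj, ne_eq, and_congr_right_iff]
  intro _
  constructor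
  · rintro (⟨s, hs, rfl⟩ | ⟨s, hs, rfl⟩)
    · simpa using hs
    · simpa using hS s hs
  · intro h
    exact Or.inl ⟨y * x⁻¹, h, by group⟩

lemma cayleyGraph_edist_mul_le_one {t : Γ} (ht : t ∈ S) (x : Γ) :
    (cayleyGraph Γ S).edist x (t * x) ≤ 1 := by
  rw [edist_le_one_iff_adj_or_eq]
  by_cases h : x = t * x
  · exact Or.inr h
  · exact Or.inl ⟨h, Or.inl ⟨t, ht, rfl⟩⟩

end Adjacency

section WordMetric

variable {Γ : Type*} [Group Γ] [DecidableEq Γ] {S : Finset Γ}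

lemma mul_inv_mem_pow_length (hS : ∀ s ∈ S, s⁻¹ ∈ S) {x y : Γ} :
    ∀ p : (cayleyGraph Γ S).Walk x y, y * x⁻¹ ∈ (insert 1 S) ^ p.length
  | .nil => by simp
  | .cons (v := z) h q => by
    have hz : z * x⁻¹ ∈ insert 1 S := mem_insert_of_mem ((cayleyGraph_adj_iff hS).mp h).2
    rw [Walk.length_cons, pow_succ]
    simpa using mul_mem_mul (mul_inv_mem_pow_length hS q) hz

lemma cayleyGraph_edist_le_of_mul_inv_mem_pow {n : ℕ} :
    ∀ {x y : Γ}, y * x⁻¹ ∈ (insert 1 S) ^ n → (cayleyGraph Γ S).edist x y ≤ n := by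
  induction n with
  | zero =>
    intro x y h
    obtain rfl : y = x := by simpa [mul_inv_eq_one] using h
    simp
  | succ n ih =>
    intro x y h
    rw [pow_succ] at h
    obtain ⟨w, hw, t, ht, hwt⟩ := mem_mul.mp h
    have hstep : (cayleyGraph Γ S).edist x (t * x) ≤ 1 := by
      rcases mem_insert.mp ht with rfl | ht
      · simp
      · exact cayleyGraph_edist_mul_le_one ht x
    have hrest : (cayleyGraph Γ S).edist (t * x) y ≤ n :=
      ih (by rwa [mul_inv_rev, ← mul_assoc, ← hwt, mul_inv_cancel_right])
    calc (cayleyGraph Γ S).edist x y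
        ≤ (cayleyGraph Γ S).edist x (t * x) + (cayleyGraph Γ S).edist (t * x) y :=
          SimpleGraph.edist_triangle
      _ ≤ 1 + n := add_le_add hstep hrest
      _ = (n + 1 : ℕ) := by push_cast; ring

lemma cayleyGraph_edist_le_iff (hS : ∀ s ∈ S, s⁻¹ ∈ S) {x y : Γ} {n : ℕ} :
    (cayleyGraph Γ S).edist x y ≤ n ↔ y * x⁻¹ ∈ (insert 1 S) ^ n := by
  refine ⟨fun h => ?_, cayleyGraph_edist_le_of_mul_inv_mem_pow⟩
  obtain ⟨p, hp⟩ := exists_walk_of_edist_ne_top (h.trans_lt (ENat.natCast_lt_top n)).ne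
  refine pow_subset_pow_right (mem_insert_self 1 S) ?_ (mul_inv_mem_pow_length hS p)
  exact_mod_cast hp ▸ h

lemma exists_mem_pow_of_closure_eq_top (hS : ∀ s ∈ S, s⁻¹ ∈ S)
    (hgen : Subgroup.closure (S : Set Γ) = ⊤) (g : Γ) : ∃ n, g ∈ (insert 1 S) ^ n := by
  have hg : g ∈ Subgroup.closure (S : Set Γ) := hgen ▸ Subgroup.mem_top g
  induction hg using Subgroup.closure_induction_left with
  | one => exact ⟨0, by simp⟩
  | mul_left s hs g _ ih =>
    obtain ⟨n, hn⟩ := ih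
    exact ⟨n + 1, pow_succ' (insert 1 S) n ▸ mul_mem_mul (mem_insert_of_mem hs) hn⟩
  | inv_mul_cancel s hs g _ ih =>
    obtain ⟨n, hn⟩ := ih
    exact ⟨n + 1, pow_succ' (insert 1 S) n ▸ mul_mem_mul (mem_insert_of_mem (hS s hs)) hn⟩

lemma cayleyGraph_connected (hS : ∀ s ∈ S, s⁻¹ ∈ S)
    (hgen : Subgroup.closure (S : Set Γ) = ⊤) : (cayleyGraph Γ S).Connected := by
  refine .mk fun x y => reachable_of_edist_ne_top ?_
  obtain ⟨n, hn⟩ := exists_mem_pow_of_closure_eq_top hS hgen (y * x⁻¹)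
  exact ((cayleyGraph_edist_le_iff hS).mpr hn).trans_lt (ENat.natCast_lt_top n) |>.ne

lemma cayleyGraph_dist_le_iff (hS : ∀ s ∈ S, s⁻¹ ∈ S)
    (hgen : Subgroup.closure (S : Set Γ) = ⊤) {x y : Γ} {n : ℕ} :
    (cayleyGraph Γ S).dist x y ≤ n ↔ y * x⁻¹ ∈ (insert 1 S) ^ n := by
  rw [← cayleyGraph_edist_le_iff hS, ← ((cayleyGraph_connected hS hgen) x y).coe_dist_eq_edist,
    Nat.cast_le]

lemma cayleyGraph_dist_eq_dist_one (hS : ∀ s ∈ S, s⁻¹ ∈ S)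
    (hgen : Subgroup.closure (S : Set Γ) = ⊤) (x y : Γ) :
    (cayleyGraph Γ S).dist x y = (cayleyGraph Γ S).dist 1 (y * x⁻¹) :=
  eq_of_forall_ge_iff fun n => by
    rw [cayleyGraph_dist_le_iff hS hgen, cayleyGraph_dist_le_iff hS hgen, inv_one, mul_one]

lemma cayleyGraph_dist_one_le_iff (hS : ∀ s ∈ S, s⁻¹ ∈ S)
    (hgen : Subgroup.closure (S : Set Γ) = ⊤) {g : Γ} {n : ℕ} :
    (cayleyGraph Γ S).dist 1 g ≤ n ↔ g ∈ (insert 1 S) ^ n := by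
  rw [cayleyGraph_dist_le_iff hS hgen, inv_one, mul_one]

end WordMetric

section Amenability

variable {Γ : Type*} [Group Γ] [DecidableEq Γ]

lemma isAmenableFG_of_finite [Finite Γ] : IsAmenableFG Γ := by
  have : Fintype Γ := Fintype.ofFinite Γ
  refine ⟨fun _ => univ, fun _ => univ_nonempty, fun ε hε _ => ⟨0, fun n _ g _ => ?_⟩⟩
  have hpos : (0 : ℝ) < #(univ : Finset Γ) := by exact_mod_cast card_pos.mpr univ_nonempty
  rw [union_eq_right.mpr (subset_univ _)]
  nlinarith

lemma exists_expansion_of_not_isAmenableFG (hΓ : ¬ IsAmenableFG Γ) {L : ℕ → Finset Γ}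
    (hL : Monotone L) (hcover : ∀ g, ∃ n, g ∈ L n) :
    ∃ ε : ℝ, 0 < ε ∧ ∃ n, ∀ F : Finset Γ, F.Nonempty →
      ∃ g ∈ L n, (1 + ε) * #F ≤ (#(F.image (fun x => g * x) ∪ F) : ℝ) := by
  -- Otherwise the sets witnessing failure for `ε = 1 / (n + 1)` and `L n` form a Følner sequence.
  by_contra! hfolner
  choose F hF_ne hF using fun n : ℕ => hfolner (1 / (n + 1)) (by positivity) n
  refine hΓ ⟨F, hF_ne, fun ε hε L' => ?_⟩
  choose idx hidx using hcover
  obtain ⟨N, hN⟩ := exists_nat_gt (1 / ε)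
  refine ⟨max (L'.sup idx) N, fun n hn g hg => (hF n g ?_).trans_le ?_⟩
  · exact hL ((le_sup hg).trans (le_of_max_le_left hn)) (hidx g)
  · have hεn : 1 / ((n : ℝ) + 1) ≤ ε := by
      rw [div_le_iff₀ (by positivity)]
      rw [div_lt_iff₀ hε] at hN
      have : (N : ℝ) ≤ n := by exact_mod_cast le_of_max_le_right hn
      nlinarith
    gcongr

end Amenability

section Spheres

variable {Γ : Type*} [Group Γ] [DecidableEq Γ] {S : Finset Γ}

noncomputable def cayleySphere (S : Finset Γ) (n : ℕ) : Finset Γ :=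
  {g ∈ (insert 1 S) ^ n | (cayleyGraph Γ S).dist 1 g = n}

lemma mem_cayleySphere (hS : ∀ s ∈ S, s⁻¹ ∈ S) (hgen : Subgroup.closure (S : Set Γ) = ⊤)
    {g : Γ} {n : ℕ} : g ∈ cayleySphere S n ↔ (cayleyGraph Γ S).dist 1 g = n := by
  simp only [cayleySphere, mem_filter, and_iff_right_iff_imp]
  exact fun h => (cayleyGraph_dist_one_le_iff hS hgen).mp h.le

lemma ncard_cayleyGraph_sphere (hS : ∀ s ∈ S, s⁻¹ ∈ S) (hgen : Subgroup.closure (S : Set Γ) = ⊤)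
    (x : Γ) (n : ℕ) : {y | (cayleyGraph Γ S).dist x y = n}.ncard = #(cayleySphere S n) := by
  have hsphere : {y | (cayleyGraph Γ S).dist x y = n} = (· * x⁻¹) ⁻¹' ↑(cayleySphere S n) := by
    ext y
    simp [mem_cayleySphere hS hgen, cayleyGraph_dist_eq_dist_one hS hgen x y]
  rw [hsphere, Set.ncard_preimage_of_injective_subset_range (mul_left_injective x⁻¹)
    (fun g _ => ⟨g * x, mul_inv_cancel_right g x⟩), Set.ncard_coe_finset]

lemma card_pow_succ_eq_card_pow_add_card_cayleySphere (hS : ∀ s ∈ S, s⁻¹ ∈ S)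
    (hgen : Subgroup.closure (S : Set Γ) = ⊤) (n : ℕ) :
    #((insert 1 S) ^ (n + 1)) = #((insert 1 S) ^ n) + #(cayleySphere S (n + 1)) := by
  rw [← card_filter_add_card_filter_not (fun g => (cayleyGraph Γ S).dist 1 g = n + 1), add_comm]
  congr 2
  ext g
  simp only [mem_filter, ← cayleyGraph_dist_one_le_iff hS hgen]
  omega

lemma cayleySphere_succ_subset (hS : ∀ s ∈ S, s⁻¹ ∈ S) (hgen : Subgroup.closure (S : Set Γ) = ⊤)
    (n : ℕ) : cayleySphere S (n + 1) ⊆ insert 1 S * cayleySphere S n := by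
  intro g hg
  rw [mem_cayleySphere hS hgen] at hg
  have hg' : g ∈ insert 1 S * (insert 1 S) ^ n := by
    rw [← pow_succ', ← cayleyGraph_dist_one_le_iff hS hgen, hg]
  obtain ⟨t, ht, z, hz, rfl⟩ := mem_mul.mp hg'
  refine mul_mem_mul ht ((mem_cayleySphere hS hgen).mpr ?_)
  have hz_le : (cayleyGraph Γ S).dist 1 z ≤ n := (cayleyGraph_dist_one_le_iff hS hgen).mpr hz
  have htz_le : (cayleyGraph Γ S).dist 1 (t * z) ≤ (cayleyGraph Γ S).dist 1 z + 1 := by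
    rw [cayleyGraph_dist_one_le_iff hS hgen, pow_succ']
    exact mul_mem_mul ht ((cayleyGraph_dist_one_le_iff hS hgen).mp le_rfl)
  omega

lemma card_cayleySphere_add_le (hS : ∀ s ∈ S, s⁻¹ ∈ S) (hgen : Subgroup.closure (S : Set Γ) = ⊤)
    (n m : ℕ) : #(cayleySphere S (n + m)) ≤ #(insert 1 S) ^ m * #(cayleySphere S n) := by
  induction m with
  | zero => simp
  | succ m ih =>
    calc #(cayleySphere S (n + m + 1))
        ≤ #(insert 1 S) * #(cayleySphere S (n + m)) :=
          (card_le_card (cayleySphere_succ_subset hS hgen _)).trans card_mul_le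
      _ ≤ #(insert 1 S) * (#(insert 1 S) ^ m * #(cayleySphere S n)) := by gcongr
      _ = #(insert 1 S) ^ (m + 1) * #(cayleySphere S n) := by ring

lemma card_cayleySphere_pos [Infinite Γ] (hS : ∀ s ∈ S, s⁻¹ ∈ S)
    (hgen : Subgroup.closure (S : Set Γ) = ⊤) (n : ℕ) : 0 < #(cayleySphere S n) := by
  -- A point outside the finite ball `T ^ n` lies on a farther sphere, which is empty if `S_n` is.
  obtain ⟨g, hg⟩ := Infinite.exists_notMem_finset ((insert 1 S) ^ n)
  have hn : n ≤ (cayleyGraph Γ S).dist 1 g := by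
    by_contra! h
    exact hg ((cayleyGraph_dist_one_le_iff hS hgen).mp h.le)
  have hpos : 0 < #(cayleySphere S (n + ((cayleyGraph Γ S).dist 1 g - n))) :=
    card_pos.mpr ⟨g, (mem_cayleySphere hS hgen).mpr (by omega)⟩
  exact Nat.pos_of_mul_pos_left (hpos.trans_le (card_cayleySphere_add_le hS hgen _ _))

lemma card_pow_add_le (hS : ∀ s ∈ S, s⁻¹ ∈ S) (hgen : Subgroup.closure (S : Set Γ) = ⊤)
    (n m : ℕ) : #((insert 1 S) ^ (n + m)) ≤
      #((insert 1 S) ^ n) + (∑ j ∈ range m, #(insert 1 S) ^ j) * #(cayleySphere S (n + 1)) := by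
  induction m with
  | zero => simp
  | succ m ih =>
    have hsphere := card_cayleySphere_add_le hS hgen (n + 1) m
    rw [← add_assoc, card_pow_succ_eq_card_pow_add_card_cayleySphere hS hgen, sum_range_succ,
      add_mul, ← add_assoc, add_right_comm n m 1]
    omega

lemma exists_card_cayleySphere_le_mul_card_cayleySphere_succ (hS : ∀ s ∈ S, s⁻¹ ∈ S)
    (hgen : Subgroup.closure (S : Set Γ) = ⊤) (hΓ : ¬ IsAmenableFG Γ) :
    ∃ L : ℝ, ∀ n, (#(cayleySphere S n) : ℝ) ≤ L * #(cayleySphere S (n + 1)) := by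
  obtain ⟨ε, hε, m, hexpand⟩ := exists_expansion_of_not_isAmenableFG hΓ
    (fun _ _ => pow_subset_pow_right (mem_insert_self 1 S))
    (exists_mem_pow_of_closure_eq_top hS hgen)
  set c := ∑ j ∈ range m, #(insert 1 S) ^ j
  refine ⟨c / ε, fun n => ?_⟩
  obtain ⟨g, hg, hgrow⟩ := hexpand ((insert 1 S) ^ n) ⟨1, one_mem_pow (mem_insert_self 1 S)⟩
  have hsub : ((insert 1 S) ^ n).image (fun x => g * x) ∪ (insert 1 S) ^ n ⊆
      (insert 1 S) ^ (n + m) := by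
    refine union_subset (fun y hy => ?_) (pow_subset_pow_right (mem_insert_self 1 S) le_self_add)
    obtain ⟨z, hz, rfl⟩ := mem_image.mp hy
    exact add_comm m n ▸ pow_add (insert 1 S) m n ▸ mul_mem_mul hg hz
  have hcount := (card_le_card hsub).trans (card_pow_add_le hS hgen n m)
  have hball : (1 + ε) * #((insert 1 S) ^ n) ≤
      (#((insert 1 S) ^ n) + c * #(cayleySphere S (n + 1)) : ℝ) :=
    hgrow.trans (by exact_mod_cast hcount)
  have hsphere : (#(cayleySphere S n) : ℝ) ≤ #((insert 1 S) ^ n) := by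
    exact_mod_cast card_filter_le _ _
  rw [div_mul_eq_mul_div, le_div_iff₀ hε]
  nlinarith

end Spheres

lemma one_div_lt_div_and_div_lt {a b K L D : ℝ} (ha : 0 < a) (hb : 0 < b) (hab : a ≤ K * b)
    (hba : b ≤ L * a) (hKD : K < D) (hLD : L < D) : 1 / D < a / b ∧ a / b < D := by
  have hD : 0 < D := by nlinarith
  constructor
  · rw [div_lt_div_iff₀ hD hb]
    nlinarith
  · rw [div_lt_iff₀ hb]
    nlinarith

/-- In a nonamenable finitely generated group, sphere sizes in the Cayley graph
grow and shrink by at most a uniformly bounded factor: there is `D > 1` with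
`1/D < |S_{i+1}(x)|/|S_i(x)| < D` for all `x`, `r ≥ 1` and `0 ≤ i < r`. -/
theorem sphere_ratio_bounded_of_nonamenable
    {Γ : Type*} [Group Γ] [DecidableEq Γ]
    (S : Finset Γ) (hSsym : ∀ s ∈ S, s⁻¹ ∈ S)
    (hSgen : Subgroup.closure (S : Set Γ) = ⊤)
    (hnonamen : ¬ IsAmenableFG Γ) :
    ∃ D : ℝ, 1 < D ∧ ∀ (x : Γ) (r i : ℕ), 1 ≤ r → i < r →
      1 / D < ({y : Γ | (cayleyGraph Γ S).dist x y = i + 1}.ncard : ℝ) /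
        ({y : Γ | (cayleyGraph Γ S).dist x y = i}.ncard : ℝ) ∧
      ({y : Γ | (cayleyGraph Γ S).dist x y = i + 1}.ncard : ℝ) /
        ({y : Γ | (cayleyGraph Γ S).dist x y = i}.ncard : ℝ) < D := by
  have : Infinite Γ := not_finite_iff_infinite.mp fun _ => hnonamen isAmenableFG_of_finite
  obtain ⟨L, hL⟩ := exists_card_cayleySphere_le_mul_card_cayleySphere_succ hSsym hSgen hnonamen
  have hupper (i : ℕ) :
      (#(cayleySphere S (i + 1)) : ℝ) ≤ #(insert 1 S) * #(cayleySphere S i) := by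
    exact_mod_cast (card_le_card (cayleySphere_succ_subset hSsym hSgen i)).trans card_mul_le
  set K : ℝ := (#(insert 1 S) : ℝ)
  have hK : 1 ≤ K := Nat.one_le_cast.mpr (card_pos.mpr (insert_nonempty 1 S))
  refine ⟨max K L + 1, by linarith [le_max_left K L], fun x _ i _ _ => ?_⟩
  simp only [ncard_cayleyGraph_sphere hSsym hSgen]
  exact one_div_lt_div_and_div_lt (by exact_mod_cast card_cayleySphere_pos hSsym hSgen _)
    (by exact_mod_cast card_cayleySphere_pos hSsym hSgen _) (hupper i) (hL i)
    (by linarith [le_max_left K L]) (by linarith [le_max_right K L])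
end
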